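/- arXiv:1011.2470 — 12 statements merged into one kernel-verified Lean document; each statement's English description precedes it below -/
import Mathlib

section
/- The Dirichlet convolution (ψ_{a,b} * μ)(n) equals μ(n)·∏_{p | gcd(a,n), p∤b} (-1/(p-2)) if n divides ab and (n is odd or b is even), and equals 0 otherwise. -/
/-!
`ψ_{a,b}(n) = ∏_{p ∣ n} h(p)` with `h(p) = 0` for `p ∣ b`, `h(p) = (1 - 1/(p-1))⁻¹` for odd
`p ∣ a` with `p ∤ b`, and `h(p) = 1` otherwise. Any such product `F` over prime factors satisfies
`F(p^k) = h(p)` for `k ≥ 1`, so `F * μ` vanishes at `p^k` for `k ≥ 2` and is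
`n ↦ μ(n) ∏_{p ∣ n} (1 - h(p))`. The local factor `1 - h(p)` is `0` when `p ∤ ab` or `p = 2 ∤ b`,
`-1/(p-2)` when `p ∣ a`, `p ∤ b`, and `1` when `p ∣ b`; for squarefree `n` the first case is
exactly the failure of `n ∣ ab ∧ (n odd ∨ b even)`.
-/

open Finset

noncomputable def phiCirc (n : ℕ) : ℝ :=
  ∏ p ∈ n.primeFactors.erase 2, (1 - 1 / ((p : ℝ) - 1))

noncomputable def psiab (a b n : ℕ) : ℝ :=
  if Nat.gcd n b = 1 then (phiCirc (Nat.gcd a n))⁻¹ else 0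

/-- Dirichlet convolution of `ψ_{a,b}` with the Möbius function. -/
noncomputable def psiMu (a b n : ℕ) : ℝ :=
  ∑ d ∈ n.divisors, psiab a b (n / d) * (ArithmeticFunction.moebius d : ℝ)

open scoped ArithmeticFunction.Moebius

namespace ArithmeticFunction

theorem mul_moebius_apply_prime_pow_succ {R : Type*} [CommRing R] (f : ArithmeticFunction R)
    {p : ℕ} (hp : p.Prime) (e : ℕ) :
    (f * μ) (p ^ (e + 1)) = f (p ^ (e + 1)) - f (p ^ e) := by
  rw [mul_comm, mul_apply,
    Nat.sum_divisorsAntidiagonal (fun x y => (μ : ArithmeticFunction R) x * f y),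
    Nat.sum_divisors_prime_pow hp, sum_range_succ', sum_range_succ', sum_eq_zero fun i _ => ?_]
  · rw [zero_add, pow_one, pow_zero, Nat.div_one, pow_succ, Nat.mul_div_cancel _ hp.pos,
      intCoe_apply, intCoe_apply, moebius_apply_prime hp, moebius_apply_one]
    push_cast
    ring
  · rw [intCoe_apply, moebius_apply_prime_pow hp (by omega), if_neg (by omega), Int.cast_zero,
      zero_mul]

theorem prodPrimeFactors_mul_moebius {R : Type*} [CommRing R] (f : ℕ → R) :
    prodPrimeFactors f * μ = pmul (μ : ArithmeticFunction R) (prodPrimeFactors (1 - f)) := by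
  refine (IsMultiplicative.eq_iff_eq_on_prime_powers _
    ((IsMultiplicative.prodPrimeFactors f).mul isMultiplicative_moebius.intCast) _
    (isMultiplicative_moebius.intCast.pmul (IsMultiplicative.prodPrimeFactors _))).2 ?_
  rintro p (_ | e) hp
  · simp
  rw [mul_moebius_apply_prime_pow_succ _ hp, pmul_apply, intCoe_apply]
  rcases e with _ | e
  · simp [hp, hp.ne_zero, moebius_apply_prime hp]
  · simp [Nat.primeFactors_prime_pow, hp, hp.ne_zero, moebius_apply_prime_pow]

end ArithmeticFunction

theorem Nat.primeFactors_gcd_eq_filter (a : ℕ) {n : ℕ} (hn : n ≠ 0) :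
    (Nat.gcd a n).primeFactors = {p ∈ n.primeFactors | p ∣ a} := by
  ext p
  simp only [Nat.mem_primeFactors, Nat.dvd_gcd_iff, ne_eq, Nat.gcd_ne_zero_right hn, hn,
    not_false_eq_true, and_true, mem_filter]
  tauto

theorem Squarefree.dvd_iff_forall_mem_primeFactors_dvd {n k : ℕ} (hn : Squarefree n) :
    n ∣ k ↔ ∀ p ∈ n.primeFactors, p ∣ k :=
  ⟨fun h _ hp => (Nat.dvd_of_mem_primeFactors hp).trans h, fun h =>
    Nat.prod_primeFactors_of_squarefree hn ▸
      prod_primes_dvd k (fun _ hp => (Nat.prime_of_mem_primeFactors hp).prime) h⟩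

noncomputable def psiLocal (a b p : ℕ) : ℝ :=
  if p ∣ b then 0 else if p ∣ a ∧ p ≠ 2 then (1 - 1 / ((p : ℝ) - 1))⁻¹ else 1

theorem psiab_eq_prod_psiLocal (a b : ℕ) {n : ℕ} (hn : n ≠ 0) :
    psiab a b n = ∏ p ∈ n.primeFactors, psiLocal a b p := by
  unfold psiab phiCirc psiLocal
  split_ifs with hcop
  · have hb : ∀ p ∈ n.primeFactors, ¬ p ∣ b := fun p hp hpb =>
      (Nat.prime_of_mem_primeFactors hp).not_dvd_one
        (hcop ▸ Nat.dvd_gcd (Nat.dvd_of_mem_primeFactors hp) hpb)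
    rw [prod_congr rfl fun p hp => if_neg (hb p hp), ← prod_filter, ← prod_inv_distrib,
      Nat.primeFactors_gcd_eq_filter a hn]
    congr 1
    ext p
    simp only [mem_erase, mem_filter]
    tauto
  · obtain ⟨p, hp, hpn, hpb⟩ := Nat.Prime.not_coprime_iff_dvd.1 hcop
    symm
    exact prod_eq_zero (hp.mem_primeFactors hpn hn) (if_pos hpb)

theorem psiMu_eq_mul_moebius_apply (a b n : ℕ) :
    psiMu a b n = (ArithmeticFunction.prodPrimeFactors (psiLocal a b) * μ) n := by
  rw [ArithmeticFunction.mul_apply, Nat.sum_divisorsAntidiagonal' (fun x y =>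
    ArithmeticFunction.prodPrimeFactors (psiLocal a b) x * (μ : ArithmeticFunction ℝ) y), psiMu]
  refine sum_congr rfl fun d hd => ?_
  have hnd : n / d ≠ 0 := (Nat.div_ne_zero_iff_of_dvd (Nat.dvd_of_mem_divisors hd)).2
    ⟨(Nat.mem_divisors.1 hd).2, (Nat.pos_of_mem_divisors hd).ne'⟩
  rw [ArithmeticFunction.prodPrimeFactors_apply hnd, ← psiab_eq_prod_psiLocal a b hnd,
    ArithmeticFunction.intCoe_apply]

theorem one_sub_psiLocal (a b : ℕ) {p : ℕ} (hp : p.Prime) :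
    1 - psiLocal a b p =
      if p ∣ a * b ∧ (p = 2 → p ∣ b) then
        (if p ∣ a ∧ ¬ p ∣ b then -1 / ((p : ℝ) - 2) else 1)
      else 0 := by
  unfold psiLocal
  by_cases hpb : p ∣ b
  · simp [hpb, dvd_mul_of_dvd_right hpb]
  by_cases hpa : p ∣ a
  · by_cases hp2 : p = 2
    · subst hp2
      simp [hpa, hpb]
    have hp3 : (3 : ℝ) ≤ p := by exact_mod_cast (hp.two_le.lt_of_ne' hp2)
    have h1 : (p : ℝ) - 1 ≠ 0 := by linarith
    have h2 : (p : ℝ) - 2 ≠ 0 := by linarith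
    rw [if_neg hpb, if_pos ⟨hpa, hp2⟩, if_pos ⟨dvd_mul_of_dvd_left hpa b, fun h => absurd h hp2⟩,
      if_pos ⟨hpa, hpb⟩, one_sub_div h1, sub_sub, one_add_one_eq_two, inv_div]
    field_simp
    ring
  · simp [hpa, hpb, hp.dvd_mul]

theorem moebius_mul_prod_one_sub_psiLocal {a b : ℕ} (hb : b ≠ 0) (n : ℕ) :
    (μ n : ℝ) * ∏ p ∈ n.primeFactors, (1 - psiLocal a b p) =
      if n ∣ a * b ∧ (Odd n ∨ Even b) then
        (μ n : ℝ) * ∏ p ∈ (Nat.gcd a n).primeFactors \ b.primeFactors, (-1 / ((p : ℝ) - 2))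
      else 0 := by
  by_cases hsq : Squarefree n
  swap
  · simp [ArithmeticFunction.moebius_eq_zero_of_not_squarefree hsq]
  have hn : n ≠ 0 := hsq.ne_zero
  have hparity : (∀ p ∈ n.primeFactors, p = 2 → p ∣ b) ↔ Odd n ∨ Even b := by
    rw [← Nat.not_even_iff_odd, even_iff_two_dvd, even_iff_two_dvd, ← imp_iff_not_or]
    exact ⟨fun h h2 => h 2 (Nat.prime_two.mem_primeFactors h2 hn) rfl,
      fun h p hp hp2 => hp2 ▸ h (hp2 ▸ Nat.dvd_of_mem_primeFactors hp)⟩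
  have hcond : (∀ p ∈ n.primeFactors, p ∣ a * b ∧ (p = 2 → p ∣ b)) ↔
      n ∣ a * b ∧ (Odd n ∨ Even b) := by
    rw [hsq.dvd_iff_forall_mem_primeFactors_dvd, ← hparity, ← forall₂_and]
  have hsupp : {p ∈ n.primeFactors | p ∣ a ∧ ¬ p ∣ b} =
      (Nat.gcd a n).primeFactors \ b.primeFactors := by
    ext p
    simp only [mem_filter, Nat.mem_primeFactors, ne_eq, Nat.primeFactors_gcd_eq_filter a hn,
      mem_sdiff, hb, not_false_eq_true, and_true, not_and]
    tauto
  rw [prod_congr rfl fun p hp => one_sub_psiLocal a b (Nat.prime_of_mem_primeFactors hp),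
    prod_ite_zero, ← prod_filter, hsupp]
  by_cases h : n ∣ a * b ∧ (Odd n ∨ Even b)
  · rw [if_pos (hcond.2 h), if_pos h]
  · rw [if_neg (mt hcond.1 h), if_neg h, mul_zero]

theorem stmt_1_general (a b n : ℕ) (hb : 0 < b) :
    psiMu a b n =
      if n ∣ a * b ∧ (Odd n ∨ Even b) then
        (ArithmeticFunction.moebius n : ℝ) *
          ∏ p ∈ (Nat.gcd a n).primeFactors \ b.primeFactors, (-1 / ((p : ℝ) - 2))
      else 0 := by
  rcases eq_or_ne n 0 with rfl | hn
  · simp [psiMu]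
  rw [psiMu_eq_mul_moebius_apply, ArithmeticFunction.prodPrimeFactors_mul_moebius,
    ArithmeticFunction.pmul_apply, ArithmeticFunction.intCoe_apply,
    ArithmeticFunction.prodPrimeFactors_apply hn]
  exact moebius_mul_prod_one_sub_psiLocal hb.ne' n

theorem stmt_1 (a b n : ℕ) (ha : 0 < a) (hb : 0 < b) (hn : 0 < n) :
    psiMu a b n =
      if n ∣ a * b ∧ (Odd n ∨ Even b) then
        (ArithmeticFunction.moebius n : ℝ) *
          ∏ p ∈ (Nat.gcd a n).primeFactors \ b.primeFactors, (-1 / ((p : ℝ) - 2))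
      else 0 :=
  stmt_1_general a b n hb
end

section
/- Fix 0 < δ ≤ 1. Then ∑_{n ≤ X} ψ_{a,b}(n) = Ψ(a,b)·X + O_δ(σ_{-δ}(ab)·X^δ), where Ψ(a,b) = φ*(b)·φ♭(a)/φ♭(gcd(a,b)) and σ_{-δ}(m) = ∑_{k|m} k^{-δ}. -/
open Finset

noncomputable def phiStar (n : ℕ) : ℝ := ∏ p ∈ n.primeFactors, (1 - 1 / (p : ℝ))

noncomputable def phiFlat (n : ℕ) : ℝ :=
  ∏ p ∈ n.primeFactors.erase 2, (1 + 1 / ((p : ℝ) * ((p : ℝ) - 2)))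

noncomputable def PsiMain (a b : ℕ) : ℝ :=
  phiStar b * phiFlat a / phiFlat (Nat.gcd a b)

noncomputable def sigmaNeg (δ : ℝ) (m : ℕ) : ℝ := ∑ k ∈ m.divisors, (k : ℝ) ^ (-δ)

/-!
For `p ∣ ab` with `p` odd or `p ∣ b`, put `c_p = -1` if `p ∣ b` and `c_p = 1/(p-2)`
otherwise (`psiCoeff`). Then `ψ_{a,b}(n) = ∏_p (1 + c_p [p ∣ n])`, and expanding the product
writes `ψ_{a,b}` as `∑_d c(d) [d ∣ n]` over squarefree `d` with `c` multiplicative. Summing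
over `n ≤ X` gives `∑_d c(d) ⌊X/d⌋`; replacing `⌊X/d⌋` by `X/d` produces the main term
`X ∏_p (1 + c_p/p) = Ψ(a,b) X` at a cost `|⌊t⌋ - t| ≤ t^δ` per term, i.e. at most
`X^δ ∏_p (1 + |c_p| p^{-δ})`. The primes dividing `b` contribute at most `σ_{-δ}(b)`, and the
others at most `exp (3 ζ(1+δ))`, because `1/(p-2) ≤ 3/p` for `p ≥ 3`.
-/

lemma abs_natFloor_sub_le_rpow {δ t : ℝ} (hδ₀ : 0 ≤ δ) (hδ₁ : δ ≤ 1) (ht : 0 ≤ t) :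
    |(⌊t⌋₊ : ℝ) - t| ≤ t ^ δ := by
  rcases lt_or_ge t 1 with h | h
  · rw [Nat.floor_eq_zero.mpr h, Nat.cast_zero, zero_sub, abs_neg, abs_of_nonneg ht]
    simpa using Real.rpow_le_rpow_of_exponent_ge' ht h.le hδ₀ hδ₁
  · have hfloor : |(⌊t⌋₊ : ℝ) - t| ≤ 1 := by
      rw [abs_le]
      constructor <;> linarith [Nat.floor_le ht, Nat.sub_one_lt_floor t]
    exact hfloor.trans (Real.one_le_rpow h hδ₀)

lemma sum_Icc_ite_dvd (N m : ℕ) (c : ℝ) :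
    ∑ n ∈ Icc 1 N, (if m ∣ n then c else 0) = c * (N / m : ℕ) := by
  rw [sum_ite, sum_const_zero, add_zero, sum_const, nsmul_eq_mul, mul_comm,
    ← Nat.Ioc_filter_dvd_card_eq_div, ← Icc_add_one_left_eq_Ioc, zero_add]

lemma abs_sum_sum_ite_dvd_sub_le {ι : Type*} (s : Finset ι) (c : ι → ℝ) (m : ι → ℕ)
    {δ X : ℝ} (hδ₀ : 0 ≤ δ) (hδ₁ : δ ≤ 1) (hX : 0 ≤ X) :
    |∑ n ∈ Icc 1 ⌊X⌋₊, ∑ i ∈ s, (if m i ∣ n then c i else 0) - X * ∑ i ∈ s, c i / m i| ≤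
      X ^ δ * ∑ i ∈ s, |c i| * (m i : ℝ) ^ (-δ) := by
  have hterm : ∀ i ∈ s, |c i * (⌊X⌋₊ / m i : ℕ) - X * (c i / m i)| ≤
      X ^ δ * (|c i| * (m i : ℝ) ^ (-δ)) := by
    intro i _
    have hm : (0 : ℝ) ≤ m i := Nat.cast_nonneg _
    rw [← Nat.floor_div_natCast, mul_div_left_comm, ← mul_sub, abs_mul,
      Real.rpow_neg hm, ← mul_assoc, mul_comm _ |c i|, mul_assoc, ← div_eq_mul_inv,
      ← Real.div_rpow hX hm, div_eq_inv_mul X, mul_comm _ X]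
    exact mul_le_mul_of_nonneg_left
      (abs_natFloor_sub_le_rpow hδ₀ hδ₁ (by positivity)) (abs_nonneg _)
  rw [sum_comm, mul_sum, mul_sum, ← sum_sub_distrib]
  simp only [sum_Icc_ite_dvd]
  exact (abs_sum_le_sum_abs _ _).trans (sum_le_sum hterm)

lemma prod_primes_dvd_iff {s : Finset ℕ} (hs : ∀ p ∈ s, p.Prime) (n : ℕ) :
    ∏ p ∈ s, p ∣ n ↔ ∀ p ∈ s, p ∣ n :=
  ⟨fun h _ hp => (dvd_prod_of_mem _ hp).trans h,
    prod_primes_dvd n fun p hp => (hs p hp).prime⟩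

lemma prod_ite_dvd_eq_sum_powerset {P : Finset ℕ} (hP : ∀ p ∈ P, p.Prime) (c : ℕ → ℝ)
    (n : ℕ) :
    ∏ p ∈ P, (if p ∣ n then 1 + c p else 1) =
      ∑ U ∈ P.powerset, if ∏ p ∈ U, p ∣ n then ∏ p ∈ U, c p else 0 := by
  have hsplit : ∀ p ∈ P, (if p ∣ n then 1 + c p else 1) = 1 + if p ∣ n then c p else 0 :=
    fun p _ => by split_ifs <;> simp
  rw [prod_congr rfl hsplit, prod_one_add]
  refine sum_congr rfl fun U hU => ?_
  rw [prod_ite_zero]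
  exact if_congr (prod_primes_dvd_iff (fun p hp => hP p (mem_powerset.mp hU hp)) n).symm
    rfl rfl

lemma abs_sum_prod_ite_dvd_sub_le {P : Finset ℕ} (hP : ∀ p ∈ P, p.Prime) (c : ℕ → ℝ)
    {δ X : ℝ} (hδ₀ : 0 ≤ δ) (hδ₁ : δ ≤ 1) (hX : 0 ≤ X) :
    |∑ n ∈ Icc 1 ⌊X⌋₊, ∏ p ∈ P, (if p ∣ n then 1 + c p else 1) -
        X * ∏ p ∈ P, (1 + c p / p)| ≤
      X ^ δ * ∏ p ∈ P, (1 + |c p| * (p : ℝ) ^ (-δ)) := by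
  have hmain :
      ∏ p ∈ P, (1 + c p / p) = ∑ U ∈ P.powerset, (∏ p ∈ U, c p) / (∏ p ∈ U, p : ℕ) := by
    simp only [prod_one_add, prod_div_distrib, Nat.cast_prod]
  have herror : ∏ p ∈ P, (1 + |c p| * (p : ℝ) ^ (-δ)) =
      ∑ U ∈ P.powerset, |∏ p ∈ U, c p| * ((∏ p ∈ U, p : ℕ) : ℝ) ^ (-δ) := by
    refine (prod_one_add P).trans (sum_congr rfl fun U _ => ?_)
    rw [prod_mul_distrib, abs_prod, Nat.cast_prod,
      Real.finsetProd_rpow _ _ fun p _ => Nat.cast_nonneg p]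
  simp only [prod_ite_dvd_eq_sum_powerset hP, hmain, herror]
  exact abs_sum_sum_ite_dvd_sub_le _ _ _ hδ₀ hδ₁ hX

noncomputable def psiCoeff (b p : ℕ) : ℝ := if p ∣ b then -1 else ((p : ℝ) - 2)⁻¹

lemma three_le_of_mem_primeFactors_erase_two {n p : ℕ} (hp : p ∈ n.primeFactors.erase 2) :
    3 ≤ p := by
  obtain ⟨hp2, hpn⟩ := mem_erase.mp hp
  have := (Nat.prime_of_mem_primeFactors hpn).two_le
  omega

lemma prime_of_mem_primeFactors_erase_union {a b p : ℕ}
    (hp : p ∈ a.primeFactors.erase 2 ∪ b.primeFactors) : p.Prime := by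
  rcases mem_union.mp hp with h | h
  exacts [Nat.prime_of_mem_primeFactors (mem_of_mem_erase h), Nat.prime_of_mem_primeFactors h]

lemma phiCirc_inv (n : ℕ) :
    (phiCirc n)⁻¹ = ∏ p ∈ n.primeFactors.erase 2, (1 + ((p : ℝ) - 2)⁻¹) := by
  rw [phiCirc, ← prod_inv_distrib]
  refine prod_congr rfl fun p hp => ?_
  have hp3 : (3 : ℝ) ≤ p := by exact_mod_cast three_le_of_mem_primeFactors_erase_two hp
  have h1 : (p : ℝ) - 1 ≠ 0 := by linarith
  have h2 : (p : ℝ) - 2 ≠ 0 := by linarith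
  rw [← one_div, one_sub_div h1, ← one_div, one_add_div h2, one_div_div]
  ring

lemma psiab_eq_prod {a b n : ℕ} (ha : a ≠ 0) (hb : b ≠ 0) (hn : n ≠ 0) :
    psiab a b n = ∏ p ∈ a.primeFactors.erase 2 ∪ b.primeFactors,
      (if p ∣ n then 1 + psiCoeff b p else 1) := by
  rw [psiab]
  split_ifs with hcop
  · have hlocal : ∀ p ∈ a.primeFactors.erase 2 ∪ b.primeFactors,
        (if p ∣ n then 1 + psiCoeff b p else 1) =
          if p ∈ (a.gcd n).primeFactors.erase 2 then 1 + ((p : ℝ) - 2)⁻¹ else 1 := by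
      intro p hp
      by_cases hpn : p ∣ n
      · have hpb : ¬ p ∣ b := fun hpb =>
          (prime_of_mem_primeFactors_erase_union hp).one_lt.ne'
            (Nat.dvd_one.mp (hcop ▸ Nat.dvd_gcd hpn hpb))
        simp_all [psiCoeff, Nat.primeFactors_gcd ha hn]
      · simp_all [Nat.primeFactors_gcd ha hn]
    rw [prod_congr rfl hlocal, prod_ite_mem, phiCirc_inv, inter_eq_right.mpr]
    exact (erase_subset_erase _ (Nat.primeFactors_mono (Nat.gcd_dvd_left a n) ha)).trans
      subset_union_left
  · obtain ⟨p, hp, hpn, hpb⟩ := Nat.Prime.not_coprime_iff_dvd.mp hcop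
    refine (prod_eq_zero (mem_union_right _ (Nat.mem_primeFactors.mpr ⟨hp, hpb, hb⟩)) ?_).symm
    simp [hpn, hpb, psiCoeff]

lemma prod_primeFactors_erase_union_psiCoeff {a b : ℕ} (hb : b ≠ 0) (f : ℕ → ℝ → ℝ) :
    ∏ p ∈ a.primeFactors.erase 2 ∪ b.primeFactors, f p (psiCoeff b p) =
      (∏ p ∈ a.primeFactors.erase 2 \ b.primeFactors, f p ((p : ℝ) - 2)⁻¹) *
        ∏ p ∈ b.primeFactors, f p (-1) := by
  rw [← sdiff_union_self_eq_union, prod_union sdiff_disjoint]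
  congr 1 <;> refine prod_congr rfl fun p hp => ?_
  · obtain ⟨hpA, hpB⟩ := mem_sdiff.mp hp
    have hpb : ¬ p ∣ b := fun h => hpB (Nat.mem_primeFactors.mpr
      ⟨Nat.prime_of_mem_primeFactors (mem_of_mem_erase hpA), h, hb⟩)
    rw [psiCoeff, if_neg hpb]
  · rw [psiCoeff, if_pos (Nat.dvd_of_mem_primeFactors hp)]

lemma prod_one_add_psiCoeff_div {a b : ℕ} (ha : a ≠ 0) (hb : b ≠ 0) :
    ∏ p ∈ a.primeFactors.erase 2 ∪ b.primeFactors, (1 + psiCoeff b p / p) = PsiMain a b := by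
  set A := a.primeFactors.erase 2
  set B := b.primeFactors
  have hgcd : (a.gcd b).primeFactors.erase 2 = A ∩ B := by
    rw [Nat.primeFactors_gcd ha hb, erase_inter]
  have hpos : 0 < phiFlat (a.gcd b) := by
    refine prod_pos fun p hp => ?_
    have hp3 : (3 : ℝ) ≤ p := by exact_mod_cast three_le_of_mem_primeFactors_erase_two hp
    have : 0 < (p : ℝ) * ((p : ℝ) - 2) := by nlinarith
    positivity
  rw [prod_primeFactors_erase_union_psiCoeff hb fun p c => 1 + c / p, PsiMain,
    eq_div_iff hpos.ne', phiFlat, phiFlat, hgcd, ← prod_inter_mul_prod_sdiff A B, phiStar]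
  have hflat :
      ∀ p ∈ A \ B, 1 + ((p : ℝ) - 2)⁻¹ / p = 1 + 1 / ((p : ℝ) * ((p : ℝ) - 2)) :=
    fun p _ => by rw [one_div, mul_inv, div_eq_mul_inv, mul_comm]
  have hstar : ∀ p ∈ B, 1 + (-1 : ℝ) / p = 1 - 1 / p := fun p _ => by ring
  rw [prod_congr rfl hflat, prod_congr rfl hstar]
  ring

lemma prod_one_add_inv_sub_two_mul_rpow_le {δ : ℝ} (hδ : 0 < δ) {F : Finset ℕ}
    (hF : ∀ p ∈ F, 3 ≤ p) :
    ∏ p ∈ F, (1 + |((p : ℝ) - 2)⁻¹| * (p : ℝ) ^ (-δ)) ≤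
      Real.exp (3 * ∑' n : ℕ, (n : ℝ) ^ (-(1 + δ))) := by
  have hterm :
      ∀ p ∈ F, |((p : ℝ) - 2)⁻¹| * (p : ℝ) ^ (-δ) ≤ 3 * (p : ℝ) ^ (-(1 + δ)) := by
    intro p hp
    have hp3 : (3 : ℝ) ≤ p := by exact_mod_cast hF p hp
    have hinv : |((p : ℝ) - 2)⁻¹| ≤ 3 * (p : ℝ)⁻¹ := by
      rw [abs_of_pos (by rw [inv_pos]; linarith), ← div_eq_mul_inv, inv_eq_one_div,
        div_le_div_iff₀ (by linarith) (by linarith)]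
      linarith
    rw [neg_add, Real.rpow_add (by linarith), Real.rpow_neg_one, ← mul_assoc]
    exact mul_le_mul_of_nonneg_right hinv (by positivity)
  have hsummable : Summable fun n : ℕ => (n : ℝ) ^ (-(1 + δ)) :=
    Real.summable_nat_rpow.mpr (by linarith)
  calc ∏ p ∈ F, (1 + |((p : ℝ) - 2)⁻¹| * (p : ℝ) ^ (-δ))
      ≤ Real.exp (∑ p ∈ F, |((p : ℝ) - 2)⁻¹| * (p : ℝ) ^ (-δ)) :=
        Real.prod_one_add_le_exp_sum F fun p => by positivity
    _ ≤ Real.exp (3 * ∑' n : ℕ, (n : ℝ) ^ (-(1 + δ))) := by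
        rw [Real.exp_le_exp]
        refine (sum_le_sum hterm).trans ?_
        rw [← mul_sum]
        gcongr
        exact hsummable.sum_le_tsum F fun n _ => by positivity

lemma sigmaNeg_le_of_dvd (δ : ℝ) {m n : ℕ} (hn : n ≠ 0) (h : m ∣ n) :
    sigmaNeg δ m ≤ sigmaNeg δ n :=
  sum_le_sum_of_subset_of_nonneg (Nat.divisors_subset_of_dvd hn h) fun _ _ _ => by positivity

lemma prod_one_add_rpow_neg_le_sigmaNeg (δ : ℝ) {b : ℕ} (hb : b ≠ 0) :
    ∏ p ∈ b.primeFactors, (1 + (p : ℝ) ^ (-δ)) ≤ sigmaNeg δ b := by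
  have hprime : ∀ U ∈ b.primeFactors.powerset, ∀ p ∈ U, p.Prime :=
    fun U hU p hp => Nat.prime_of_mem_primeFactors (mem_powerset.mp hU hp)
  have hinj : Set.InjOn (fun U : Finset ℕ => ∏ p ∈ U, p) b.primeFactors.powerset :=
    fun U hU V hV hUV => by
      rw [← Nat.primeFactors_prod (hprime U hU), ← Nat.primeFactors_prod (hprime V hV)]
      exact congrArg Nat.primeFactors hUV
  have hdiv : b.primeFactors.powerset.image (fun U => ∏ p ∈ U, p) ⊆ b.divisors := by
    simp only [subset_iff, mem_image, Nat.mem_divisors]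
    rintro _ ⟨U, hU, rfl⟩
    exact ⟨(prod_primes_dvd_iff (hprime U hU) b).mpr fun p hp =>
      Nat.dvd_of_mem_primeFactors (mem_powerset.mp hU hp), hb⟩
  calc ∏ p ∈ b.primeFactors, (1 + (p : ℝ) ^ (-δ))
      = ∑ U ∈ b.primeFactors.powerset, ((∏ p ∈ U, p : ℕ) : ℝ) ^ (-δ) := by
        simp only [prod_one_add, Nat.cast_prod,
          Real.finsetProd_rpow _ _ fun p _ => Nat.cast_nonneg p]
    _ = ∑ d ∈ b.primeFactors.powerset.image (fun U => ∏ p ∈ U, p), (d : ℝ) ^ (-δ) :=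
        (sum_image (f := fun d : ℕ => (d : ℝ) ^ (-δ)) hinj).symm
    _ ≤ sigmaNeg δ b := sum_le_sum_of_subset_of_nonneg hdiv fun _ _ _ => by positivity

lemma prod_one_add_abs_psiCoeff_mul_rpow_le {δ : ℝ} (hδ : 0 < δ) {a b : ℕ} (ha : a ≠ 0)
    (hb : b ≠ 0) :
    ∏ p ∈ a.primeFactors.erase 2 ∪ b.primeFactors,
        (1 + |psiCoeff b p| * (p : ℝ) ^ (-δ)) ≤
      Real.exp (3 * ∑' n : ℕ, (n : ℝ) ^ (-(1 + δ))) * sigmaNeg δ (a * b) := by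
  rw [prod_primeFactors_erase_union_psiCoeff hb fun p c => 1 + |c| * (p : ℝ) ^ (-δ)]
  simp only [abs_neg, abs_one, one_mul]
  exact mul_le_mul
    (prod_one_add_inv_sub_two_mul_rpow_le hδ fun p hp =>
      three_le_of_mem_primeFactors_erase_two (mem_sdiff.mp hp).1)
    ((prod_one_add_rpow_neg_le_sigmaNeg δ hb).trans
      (sigmaNeg_le_of_dvd δ (mul_ne_zero ha hb) (dvd_mul_left b a)))
    (prod_nonneg fun p _ => by positivity) (Real.exp_pos _).le

theorem stmt_3 (δ : ℝ) (hδ : 0 < δ) (hδ' : δ ≤ 1) :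
    ∃ C : ℝ, 0 < C ∧ ∀ a b : ℕ, 0 < a → 0 < b → ∀ X : ℝ, 1 ≤ X →
      |(∑ n ∈ Finset.Icc 1 ⌊X⌋₊, psiab a b n) - PsiMain a b * X| ≤
        C * sigmaNeg δ (a * b) * X ^ δ := by
  refine ⟨Real.exp (3 * ∑' n : ℕ, (n : ℝ) ^ (-(1 + δ))), Real.exp_pos _, ?_⟩
  intro a b ha hb X hX
  have hexpand : ∑ n ∈ Icc 1 ⌊X⌋₊, psiab a b n = ∑ n ∈ Icc 1 ⌊X⌋₊,
      ∏ p ∈ a.primeFactors.erase 2 ∪ b.primeFactors,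
        (if p ∣ n then 1 + psiCoeff b p else 1) :=
    sum_congr rfl fun n hn =>
      psiab_eq_prod ha.ne' hb.ne' (Nat.one_le_iff_ne_zero.mp (mem_Icc.mp hn).1)
  rw [hexpand, ← prod_one_add_psiCoeff_div ha.ne' hb.ne', mul_comm _ X]
  calc _ ≤ X ^ δ * ∏ p ∈ a.primeFactors.erase 2 ∪ b.primeFactors,
          (1 + |psiCoeff b p| * (p : ℝ) ^ (-δ)) :=
        abs_sum_prod_ite_dvd_sub_le (fun p => prime_of_mem_primeFactors_erase_union)
          _ hδ.le hδ' (by linarith)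
    _ ≤ X ^ δ * (Real.exp (3 * ∑' n : ℕ, (n : ℝ) ^ (-(1 + δ))) *
          sigmaNeg δ (a * b)) := by
        gcongr
        exact prod_one_add_abs_psiCoeff_mul_rpow_le hδ ha.ne' hb.ne'
    _ = _ := by ring
end

section
/- If b is odd, then ∑_{n ≤ X, n even} ψ_{a,b}(n) = (1/2)·Ψ(a,b)·X + O_δ(σ_{-δ}(ab)·X^δ) for any fixed 0 < δ ≤ 1. -/
/-!
An odd prime divides `2m` iff it divides `m`; for odd `b` this makes the even `n ≤ X` contribute
`∑_{m ≤ X/2} ψ_{a,b}(m)`. Writing `(1 - 1/(p-1))⁻¹ = 1 + 1/(p-2)`, one has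
`ψ_{a,b}(m) = ∏_{p ∣ m} (1 + h(p))` over the odd primes `p ∣ ab`, with `h(p) = -1` for `p ∣ b`
(this kills `m` not coprime to `b`) and `h(p) = 1/(p-2)` otherwise. Expanding the product,
`ψ_{a,b} = 1 * g` with `g(d) = ∏_{p ∣ d} h(p)` supported on squarefree odd `d ∣ ab` and `|g| ≤ 1`,
so the sum is `∑_d g(d) ⌊X/(2d)⌋`. The main term is `(X/2) ∑_d g(d)/d = (X/2) ∏_p (1 + h(p)/p)`,
which is `(X/2) Ψ(a,b)`, and replacing `⌊y⌋` by `y` costs at most `y^δ`, giving the error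
`∑_{d ∣ ab} (X/d)^δ ≤ σ_{-δ}(ab) X^δ`.
-/

open Finset

lemma abs_natFloor_sub_le_rpow_s5 {δ y : ℝ} (hδ : 0 < δ) (hδ1 : δ ≤ 1) (hy : 0 ≤ y) :
    |(⌊y⌋₊ : ℝ) - y| ≤ y ^ δ := by
  rcases lt_or_ge y 1 with hy1 | hy1
  · rw [Nat.floor_eq_zero.mpr hy1, Nat.cast_zero, zero_sub, abs_neg, abs_of_nonneg hy]
    simpa using Real.rpow_le_rpow_of_exponent_ge' hy hy1.le hδ.le hδ1
  · calc |(⌊y⌋₊ : ℝ) - y| ≤ 1 := by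
          rw [abs_sub_comm, abs_of_nonneg (sub_nonneg.mpr (Nat.floor_le hy))]
          linarith [Nat.lt_floor_add_one y]
      _ ≤ y ^ δ := Real.one_le_rpow hy1 hδ.le

section Counting

variable {ι : Type*} (I : Finset ι) (d : ι → ℕ) (g : ι → ℝ)

lemma sum_Icc_sum_filter_dvd (M : ℕ) :
    ∑ m ∈ Icc 1 M, ∑ i ∈ I with d i ∣ m, g i = ∑ i ∈ I, g i * (M / d i : ℕ) := by
  simp_rw [sum_filter]
  rw [sum_comm]
  refine sum_congr rfl fun i _ => ?_
  rw [← sum_filter, sum_const, nsmul_eq_mul, mul_comm, ← Nat.Ioc_filter_dvd_card_eq_div,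
    ← Icc_add_one_left_eq_Ioc, zero_add]

lemma abs_sum_Icc_sum_filter_dvd_sub_le {δ Y : ℝ} (hδ : 0 < δ) (hδ1 : δ ≤ 1) (hY : 0 ≤ Y) :
    |∑ m ∈ Icc 1 ⌊Y⌋₊, ∑ i ∈ I with d i ∣ m, g i - Y * ∑ i ∈ I, g i / d i| ≤
      ∑ i ∈ I, |g i| * (Y / d i) ^ δ := by
  rw [sum_Icc_sum_filter_dvd, mul_sum, ← sum_sub_distrib]
  refine (abs_sum_le_sum_abs _ _).trans (sum_le_sum fun i _ => ?_)
  have hterm : g i * (⌊Y⌋₊ / d i : ℕ) - Y * (g i / d i) = g i * (⌊Y / d i⌋₊ - Y / d i) := by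
    rw [Nat.floor_div_natCast]; ring
  rw [hterm, abs_mul]
  exact mul_le_mul_of_nonneg_left
    (abs_natFloor_sub_le_rpow_s5 hδ hδ1 (div_nonneg hY (Nat.cast_nonneg _))) (abs_nonneg _)

end Counting

lemma prod_filter_dvd_one_add {R : Type*} [CommRing R] {P : Finset ℕ} (hP : ∀ p ∈ P, p.Prime)
    (h : ℕ → R) (m : ℕ) :
    ∏ p ∈ P with p ∣ m, (1 + h p) = ∑ S ∈ P.powerset with ∏ p ∈ S, p ∣ m, ∏ p ∈ S, h p := by
  rw [prod_one_add]
  congr 1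
  ext S
  simp only [mem_powerset, mem_filter, subset_iff]
  constructor
  · intro hS
    exact ⟨fun p hp => (hS hp).1, prod_primes_dvd m (fun p hp => (hP p (hS hp).1).prime)
      fun p hp => (hS hp).2⟩
  · rintro ⟨hS, hdvd⟩ p hp
    exact ⟨hS hp, (dvd_prod_of_mem _ hp).trans hdvd⟩

lemma sum_powerset_prod_rpow_neg_le_sigmaNeg {P : Finset ℕ} {n : ℕ} (hn : n ≠ 0)
    (hP : P ⊆ n.primeFactors) (δ : ℝ) :
    ∑ S ∈ P.powerset, ((∏ p ∈ S, p : ℕ) : ℝ) ^ (-δ) ≤ sigmaNeg δ n := by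
  have hprime : ∀ S ∈ P.powerset, ∀ p ∈ S, p.Prime := fun S hS p hp =>
    Nat.prime_of_mem_primeFactors (hP (mem_powerset.mp hS hp))
  rw [sigmaNeg, ← sum_image (f := fun k : ℕ => (k : ℝ) ^ (-δ)) fun S hS T hT hST => by
    rw [← Nat.primeFactors_prod (hprime S hS), ← Nat.primeFactors_prod (hprime T hT)]
    exact congrArg Nat.primeFactors hST]
  refine sum_le_sum_of_subset_of_nonneg (fun k hk => ?_) fun k _ _ => by positivity
  obtain ⟨S, hS, rfl⟩ := mem_image.mp hk
  exact Nat.mem_divisors.mpr ⟨prod_primes_dvd n (fun p hp => (hprime S hS p hp).prime)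
    fun p hp => Nat.dvd_of_mem_primeFactors (hP (mem_powerset.mp hS hp)), hn⟩

lemma sum_powerset_abs_prod_mul_rpow_le {P : Finset ℕ} {n : ℕ} (hn : n ≠ 0)
    (hP : P ⊆ n.primeFactors) {h : ℕ → ℝ} (hh : ∀ p ∈ P, |h p| ≤ 1) {δ Y : ℝ} (hY : 0 ≤ Y) :
    ∑ S ∈ P.powerset, |∏ p ∈ S, h p| * (Y / (∏ p ∈ S, p : ℕ)) ^ δ ≤ Y ^ δ * sigmaNeg δ n := by
  calc _ ≤ ∑ S ∈ P.powerset, Y ^ δ * ((∏ p ∈ S, p : ℕ) : ℝ) ^ (-δ) := by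
        refine sum_le_sum fun S hS => ?_
        rw [Real.div_rpow hY (Nat.cast_nonneg _), Real.rpow_neg (Nat.cast_nonneg _), abs_prod,
          ← div_eq_mul_inv]
        exact mul_le_of_le_one_left (by positivity)
          (prod_le_one (fun _ _ => abs_nonneg _) fun p hp => hh p (mem_powerset.mp hS hp))
    _ ≤ Y ^ δ * sigmaNeg δ n := by
        rw [← mul_sum]
        exact mul_le_mul_of_nonneg_left (sum_powerset_prod_rpow_neg_le_sigmaNeg hn hP δ)
          (by positivity)

lemma sum_Icc_filter_even {M : Type*} [AddCommMonoid M] (f : ℕ → M) (N : ℕ) :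
    ∑ n ∈ Icc 1 N with Even n, f n = ∑ m ∈ Icc 1 (N / 2), f (2 * m) := by
  symm
  refine sum_nbij' (2 * ·) (· / 2) (fun m hm => ?_) (fun n hn => ?_) (fun m _ => ?_)
    (fun n hn => ?_) fun _ _ => rfl
  all_goals simp only [mem_Icc, mem_filter] at *
  · exact ⟨by omega, even_two_mul m⟩
  · obtain ⟨k, rfl⟩ := hn.2; omega
  · omega
  · obtain ⟨k, rfl⟩ := hn.2; omega

lemma inv_one_sub_one_div_sub_one {x : ℝ} (h1 : x - 1 ≠ 0) (h2 : x - 2 ≠ 0) :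
    (1 - 1 / (x - 1))⁻¹ = 1 + (x - 2)⁻¹ := by
  refine inv_eq_of_mul_eq_one_right ?_
  field_simp
  ring

noncomputable def psiWeight (b p : ℕ) : ℝ := if p ∣ b then -1 else ((p : ℝ) - 2)⁻¹

lemma abs_psiWeight_le_one (b : ℕ) {p : ℕ} (hp : 3 ≤ p) : |psiWeight b p| ≤ 1 := by
  have hp' : (3 : ℝ) ≤ p := by exact_mod_cast hp
  unfold psiWeight
  split_ifs
  · simp
  · rw [abs_inv, abs_of_pos (by linarith)]
    exact inv_le_one_of_one_le₀ (by linarith)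

lemma psiab_eq_prod_s5 {a b : ℕ} (ha : a ≠ 0) (hb : Odd b) (m : ℕ) :
    psiab a b m = ∏ p ∈ (a * b).primeFactors.erase 2 with p ∣ m, (1 + psiWeight b p) := by
  have hb0 : b ≠ 0 := hb.pos.ne'
  unfold psiab
  split_ifs with hmb
  · have hset : (a.gcd m).primeFactors.erase 2 = {p ∈ (a * b).primeFactors.erase 2 | p ∣ m} := by
      ext p
      simp only [mem_erase, mem_filter, Nat.mem_primeFactors, Nat.dvd_gcd_iff]
      constructor
      · rintro ⟨hp2, hp, ⟨hpa, hpm⟩, -⟩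
        exact ⟨⟨hp2, hp, dvd_mul_of_dvd_left hpa b, mul_ne_zero ha hb0⟩, hpm⟩
      · rintro ⟨⟨hp2, hp, hpab, -⟩, hpm⟩
        have hpb : ¬ p ∣ b := fun hpb => hp.one_lt.ne' (Nat.eq_one_of_dvd_coprimes hmb hpm hpb)
        exact ⟨hp2, hp, ⟨(hp.dvd_mul.mp hpab).resolve_right hpb, hpm⟩, Nat.gcd_ne_zero_left ha⟩
    rw [phiCirc, hset, ← prod_inv_distrib]
    refine prod_congr rfl fun p hp => ?_
    obtain ⟨hpP, hpm⟩ := mem_filter.mp hp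
    have hp3 : (3 : ℝ) ≤ p := by exact_mod_cast three_le_of_mem_primeFactors_erase_two hpP
    have hpb : ¬ p ∣ b := fun hpb =>
      (Nat.prime_of_mem_primeFactors (mem_of_mem_erase hpP)).one_lt.ne'
        (Nat.eq_one_of_dvd_coprimes hmb hpm hpb)
    rw [psiWeight, if_neg hpb, inv_one_sub_one_div_sub_one (by linarith) (by linarith)]
  · obtain ⟨p, hp, hpmb⟩ := Nat.exists_prime_and_dvd hmb
    have hpb : p ∣ b := hpmb.trans (Nat.gcd_dvd_right m b)
    have hp2 : p ≠ 2 := by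
      rintro rfl
      exact Nat.not_even_iff_odd.mpr hb (even_iff_two_dvd.mpr hpb)
    refine (prod_eq_zero (i := p) ?_ ?_).symm
    · exact mem_filter.mpr ⟨mem_erase.mpr ⟨hp2, Nat.mem_primeFactors.mpr
        ⟨hp, dvd_mul_of_dvd_right hpb a, mul_ne_zero ha hb0⟩⟩, hpmb.trans (Nat.gcd_dvd_left m b)⟩
    · simp [psiWeight, hpb]

lemma prod_one_add_psiWeight_div_eq_PsiMain {a b : ℕ} (ha : a ≠ 0) (hb : Odd b) :
    ∏ p ∈ (a * b).primeFactors.erase 2, (1 + psiWeight b p / p) = PsiMain a b := by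
  have hb0 : b ≠ 0 := hb.pos.ne'
  have hflat_pos : ∀ p ∈ a.primeFactors.erase 2, 0 < 1 + 1 / ((p : ℝ) * (p - 2)) := by
    intro p hp
    have hp3 : (3 : ℝ) ≤ p := by exact_mod_cast three_le_of_mem_primeFactors_erase_two hp
    have : 0 < (p : ℝ) * (p - 2) := by nlinarith
    positivity
  have hdvd : {p ∈ (a * b).primeFactors.erase 2 | p ∣ b} = b.primeFactors := by
    ext p
    simp only [mem_filter, mem_erase, Nat.mem_primeFactors]
    constructor
    · rintro ⟨⟨-, hp, -, -⟩, hpb⟩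
      exact ⟨hp, hpb, hb0⟩
    · rintro ⟨hp, hpb, -⟩
      refine ⟨⟨?_, hp, dvd_mul_of_dvd_right hpb a, mul_ne_zero ha hb0⟩, hpb⟩
      rintro rfl
      exact Nat.not_even_iff_odd.mpr hb (even_iff_two_dvd.mpr hpb)
  have hndvd : {p ∈ (a * b).primeFactors.erase 2 | ¬ p ∣ b} =
      {p ∈ a.primeFactors.erase 2 | ¬ p ∣ b} := by
    ext p
    simp only [mem_filter, mem_erase, Nat.mem_primeFactors]
    constructor
    · rintro ⟨⟨hp2, hp, hpab, -⟩, hpb⟩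
      exact ⟨⟨hp2, hp, (hp.dvd_mul.mp hpab).resolve_right hpb, ha⟩, hpb⟩
    · rintro ⟨⟨hp2, hp, hpa, -⟩, hpb⟩
      exact ⟨⟨hp2, hp, dvd_mul_of_dvd_left hpa b, mul_ne_zero ha hb0⟩, hpb⟩
  have hgcd : (a.gcd b).primeFactors.erase 2 = {p ∈ a.primeFactors.erase 2 | p ∣ b} := by
    ext p
    simp only [Nat.primeFactors_gcd ha hb0, mem_erase, mem_inter, mem_filter,
      Nat.mem_primeFactors]
    tauto
  rw [PsiMain, phiStar, phiFlat, phiFlat, hgcd, ← prod_filter_mul_prod_filter_not _ (· ∣ b),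
    ← prod_filter_mul_prod_filter_not (a.primeFactors.erase 2) (· ∣ b), hdvd, hndvd,
    mul_div_assoc, mul_div_cancel_left₀ _
      (prod_pos fun p hp => hflat_pos p (mem_filter.mp hp).1).ne']
  congr 1
  · refine prod_congr rfl fun p hp => ?_
    rw [psiWeight, if_pos (Nat.dvd_of_mem_primeFactors hp)]
    ring
  · refine prod_congr rfl fun p hp => ?_
    rw [psiWeight, if_neg (mem_filter.mp hp).2, inv_div_left, one_div]

theorem stmt_5 (δ : ℝ) (hδ : 0 < δ) (hδ' : δ ≤ 1) :
    ∃ C : ℝ, 0 < C ∧ ∀ a b : ℕ, 0 < a → 0 < b → Odd b → ∀ X : ℝ, 1 ≤ X →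
      |(∑ n ∈ (Finset.Icc 1 ⌊X⌋₊).filter (fun n => Even n), psiab a b n) -
          (1 / 2) * PsiMain a b * X| ≤
        C * sigmaNeg δ (a * b) * X ^ δ := by
  refine ⟨1, one_pos, fun a b ha _ hb X hX => ?_⟩
  set P := (a * b).primeFactors.erase 2
  have hP : ∀ p ∈ P, p.Prime := fun p hp => Nat.prime_of_mem_primeFactors (mem_of_mem_erase hp)
  have hsum : ∑ n ∈ Icc 1 ⌊X⌋₊ with Even n, psiab a b n =
      ∑ m ∈ Icc 1 ⌊X / 2⌋₊, ∑ S ∈ P.powerset with ∏ p ∈ S, p ∣ m, ∏ p ∈ S, psiWeight b p := by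
    rw [sum_Icc_filter_even, ← Nat.floor_div_ofNat]
    refine sum_congr rfl fun m _ => ?_
    rw [psiab_eq_prod_s5 ha.ne' hb, ← prod_filter_dvd_one_add hP]
    refine prod_congr (filter_congr fun p hp => ?_) fun _ _ => rfl
    exact Nat.Coprime.dvd_mul_left
      ((Nat.coprime_primes (hP p hp) Nat.prime_two).mpr (ne_of_mem_erase hp))
  have hmain : (1 / 2) * PsiMain a b * X =
      X / 2 * ∑ S ∈ P.powerset, (∏ p ∈ S, psiWeight b p) / (∏ p ∈ S, p : ℕ) := by
    rw [← prod_one_add_psiWeight_div_eq_PsiMain ha.ne' hb, prod_one_add]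
    simp_rw [prod_div_distrib, Nat.cast_prod]
    ring
  calc _ ≤ ∑ S ∈ P.powerset, |∏ p ∈ S, psiWeight b p| * (X / 2 / (∏ p ∈ S, p : ℕ)) ^ δ := by
        rw [hsum, hmain]
        exact abs_sum_Icc_sum_filter_dvd_sub_le _ _ _ hδ hδ' (by positivity)
    _ ≤ (X / 2) ^ δ * sigmaNeg δ (a * b) :=
        sum_powerset_abs_prod_mul_rpow_le (by positivity) (erase_subset _ _)
          (fun p hp => abs_psiWeight_le_one b (three_le_of_mem_primeFactors_erase_two hp))
          (by positivity)
    _ ≤ 1 * sigmaNeg δ (a * b) * X ^ δ := by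
        rw [one_mul, mul_comm]
        have : 0 ≤ sigmaNeg δ (a * b) := sum_nonneg fun k _ => by positivity
        gcongr
        linarith
end

section
/- Let η₂, η₃, η₅, η₆, η₇, η₁, η₄ be positive integers and α₁, α₂, α₄ integers with gcd(η₆, η₇) = 1. Then the equation η₂η₃²η₅²η₆² + η₁²η₂η₄²η₇² + η₅η₇α₁ − η₄η₆α₄ = 0 holds if and only if there exists an integer α₂ such that η₁²η₂η₄²η₇ + η₅α₁ − η₆α₂ = 0 and η₂η₃²η₅²η₆ + η₇α₂ − η₄α₄ = 0. -/
/-! The torsor equation reads `η₆ (A - D) + η₇ (B + C) = 0` with `A = η₂η₃²η₅²η₆`,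
`B = η₁²η₂η₄²η₇`, `C = η₅α₁`, `D = η₄α₄`, and over coprime `η₆, η₇` such a relation is
exactly a common multiple: `B + C = η₆ α₂` and `A - D = -η₇ α₂`. -/

theorem IsCoprime.mul_add_mul_eq_zero_iff {R : Type*} [CommRing R] {x y u v : R}
    (h : IsCoprime x y) : x * u + y * v = 0 ↔ ∃ t, v = x * t ∧ u = -(y * t) := by
  constructor
  · intro huv
    obtain ⟨a, b, hab⟩ := h
    exact ⟨a * v - b * u, by linear_combination (-v) * hab + b * huv,
      by linear_combination (-u) * hab + a * huv⟩
  · rintro ⟨t, rfl, rfl⟩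
    ring

theorem stmt_8_general (η₁ η₂ η₃ η₄ η₅ η₆ η₇ : ℤ) (α₁ α₄ : ℤ)
    (hcop : IsCoprime η₆ η₇) :
    η₂ * η₃ ^ 2 * η₅ ^ 2 * η₆ ^ 2 + η₁ ^ 2 * η₂ * η₄ ^ 2 * η₇ ^ 2 +
        η₅ * η₇ * α₁ - η₄ * η₆ * α₄ = 0 ↔
      ∃ α₂ : ℤ,
        η₁ ^ 2 * η₂ * η₄ ^ 2 * η₇ + η₅ * α₁ - η₆ * α₂ = 0 ∧
        η₂ * η₃ ^ 2 * η₅ ^ 2 * η₆ + η₇ * α₂ - η₄ * α₄ = 0 := by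
  have split := hcop.mul_add_mul_eq_zero_iff (u := η₂ * η₃ ^ 2 * η₅ ^ 2 * η₆ - η₄ * α₄)
    (v := η₁ ^ 2 * η₂ * η₄ ^ 2 * η₇ + η₅ * α₁)
  constructor
  · intro h
    obtain ⟨α₂, hv, hu⟩ := split.1 (by linear_combination h)
    exact ⟨α₂, by linear_combination hv, by linear_combination hu⟩
  · rintro ⟨α₂, hv, hu⟩
    linear_combination split.2 ⟨α₂, by linear_combination hv, by linear_combination hu⟩

theorem stmt_8 (η₁ η₂ η₃ η₄ η₅ η₆ η₇ : ℤ) (α₁ α₄ : ℤ)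
    (h₁ : 0 < η₁) (h₂ : 0 < η₂) (h₃ : 0 < η₃) (h₄ : 0 < η₄) (h₅ : 0 < η₅)
    (h₆ : 0 < η₆) (h₇ : 0 < η₇) (hcop : IsCoprime η₆ η₇) :
    η₂ * η₃ ^ 2 * η₅ ^ 2 * η₆ ^ 2 + η₁ ^ 2 * η₂ * η₄ ^ 2 * η₇ ^ 2 +
        η₅ * η₇ * α₁ - η₄ * η₆ * α₄ = 0 ↔
      ∃ α₂ : ℤ,
        η₁ ^ 2 * η₂ * η₄ ^ 2 * η₇ + η₅ * α₁ - η₆ * α₂ = 0 ∧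
        η₂ * η₃ ^ 2 * η₅ ^ 2 * η₆ + η₇ * α₂ - η₄ * α₄ = 0 :=
  stmt_8_general η₁ η₂ η₃ η₄ η₅ η₆ η₇ α₁ α₄ hcop
end

section
/- Suppose positive integers η₁,...,η₇ and integers α₁, α₂, α₄ satisfy η₁²η₂η₄²η₇ + η₅α₁ − η₆α₂ = 0 and η₂η₃²η₅²η₆ + η₇α₂ − η₄α₄ = 0, together with gcd(η₃η₅η₆, η₁η₄η₇) = 1, gcd(η₅η₇, η₂α₄) = 1, and gcd(η₁η₂η₃, α₁α₄) = 1. Then gcd(η₁η₂, η₆α₂) = 1. -/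
theorem stmt_9_general (η₁ η₂ η₃ η₄ η₅ η₆ η₇ : ℤ) (α₁ α₂ α₄ : ℤ)
    (e₁ : η₁ ^ 2 * η₂ * η₄ ^ 2 * η₇ + η₅ * α₁ - η₆ * α₂ = 0)
    (c₁ : IsCoprime (η₃ * η₅ * η₆) (η₁ * η₄ * η₇))
    (c₂ : IsCoprime (η₅ * η₇) (η₂ * α₄))
    (c₃ : IsCoprime (η₁ * η₂ * η₃) (α₁ * α₄)) :
    IsCoprime (η₁ * η₂) (η₆ * α₂) := by
  have hη₅ : IsCoprime (η₁ * η₂) η₅ :=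
    .mul_left c₁.symm.of_mul_left_left.of_mul_left_left.of_mul_right_left.of_mul_right_right
      c₂.symm.of_mul_left_left.of_mul_right_left
  have hα₁ : IsCoprime (η₁ * η₂) α₁ := c₃.of_mul_left_left.of_mul_right_left
  have hα₂ : η₆ * α₂ = η₅ * α₁ + η₁ * η₂ * (η₁ * η₄ ^ 2 * η₇) := by linear_combination -e₁
  rw [hα₂]
  exact (hη₅.mul_right hα₁).add_mul_left_right _

theorem stmt_9 (η₁ η₂ η₃ η₄ η₅ η₆ η₇ : ℤ) (α₁ α₂ α₄ : ℤ)
    (h₁ : 0 < η₁) (h₂ : 0 < η₂) (h₃ : 0 < η₃) (h₄ : 0 < η₄) (h₅ : 0 < η₅)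
    (h₆ : 0 < η₆) (h₇ : 0 < η₇)
    (e₁ : η₁ ^ 2 * η₂ * η₄ ^ 2 * η₇ + η₅ * α₁ - η₆ * α₂ = 0)
    (e₂ : η₂ * η₃ ^ 2 * η₅ ^ 2 * η₆ + η₇ * α₂ - η₄ * α₄ = 0)
    (c₁ : IsCoprime (η₃ * η₅ * η₆) (η₁ * η₄ * η₇))
    (c₂ : IsCoprime (η₅ * η₇) (η₂ * α₄))
    (c₃ : IsCoprime (η₁ * η₂ * η₃) (α₁ * α₄)) :
    IsCoprime (η₁ * η₂) (η₆ * α₂) :=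
  stmt_9_general η₁ η₂ η₃ η₄ η₅ η₆ η₇ α₁ α₂ α₄ e₁ c₁ c₂ c₃
end

section
/- Under the same torsor equations and coprimality hypotheses (gcd(η₃η₅η₆, η₁η₄η₇) = 1, gcd(η₅η₇, η₂α₄) = 1, gcd(η₁η₂η₃, α₁α₄) = 1), one has gcd(α₂, η₃η₅) = 1 and gcd(η₂, η₄) = 1. -/
/-!
Each equation is a congruence between two products modulo a third factor, e.g.
`η₇ α₂ ≡ η₄ α₄ (mod η₃)` and `η₆ α₂ ≡ η₁² η₂ η₄² η₇ (mod η₅)`. Being coprime to a modulus only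
depends on the residue class, so these congruences carry the coprimality hypotheses over to
`α₂`; then `η₇ α₂ ≡ η₄ α₄ (mod η₂)` gives `gcd(η₂, η₄) = 1`.
-/

theorem IsCoprime.of_dvd_sub {R : Type*} [CommRing R] {a u v : R} (h : IsCoprime a u)
    (hd : a ∣ u - v) : IsCoprime a v := by
  obtain ⟨c, hc⟩ := hd
  rwa [show v = u - a * c by rw [← hc]; ring, IsCoprime.sub_mul_left_right_iff]

theorem stmt_10_general (η₁ η₂ η₃ η₄ η₅ η₆ η₇ : ℤ) (α₁ α₂ α₄ : ℤ)
    (e₁ : η₁ ^ 2 * η₂ * η₄ ^ 2 * η₇ + η₅ * α₁ - η₆ * α₂ = 0)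
    (e₂ : η₂ * η₃ ^ 2 * η₅ ^ 2 * η₆ + η₇ * α₂ - η₄ * α₄ = 0)
    (c₁ : IsCoprime (η₃ * η₅ * η₆) (η₁ * η₄ * η₇))
    (c₂ : IsCoprime (η₅ * η₇) (η₂ * α₄))
    (c₃ : IsCoprime (η₁ * η₂ * η₃) (α₁ * α₄)) :
    IsCoprime α₂ (η₃ * η₅) ∧ IsCoprime η₂ η₄ := by
  simp only [IsCoprime.mul_left_iff, IsCoprime.mul_right_iff] at c₁ c₂ c₃
  obtain ⟨⟨⟨⟨-, c51⟩, -⟩, ⟨c34, c54⟩, -⟩, ⟨-, c57⟩, -⟩ := c₁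
  obtain ⟨⟨c52, c72⟩, -⟩ := c₂
  obtain ⟨⟨⟨-, c2α₁⟩, -⟩, -, c3α₄⟩ := c₃
  have c3α₂ : IsCoprime η₃ α₂ :=
    ((c34.mul_right c3α₄).of_dvd_sub (v := η₇ * α₂)
      ⟨η₂ * η₃ * η₅ ^ 2 * η₆, by linear_combination -e₂⟩).of_mul_right_right
  have c5α₂ : IsCoprime η₅ α₂ :=
    ((((c51.pow_right.mul_right c52).mul_right c54.pow_right).mul_right c57).of_dvd_sub
      (u := η₁ ^ 2 * η₂ * η₄ ^ 2 * η₇) (v := η₆ * α₂)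
      ⟨-α₁, by linear_combination e₁⟩).of_mul_right_right
  have c2α₂ : IsCoprime η₂ α₂ :=
    ((c52.symm.mul_right c2α₁).of_dvd_sub (v := η₆ * α₂)
      ⟨-(η₁ ^ 2 * η₄ ^ 2 * η₇), by linear_combination e₁⟩).of_mul_right_right
  have c24 : IsCoprime η₂ η₄ :=
    ((c72.symm.mul_right c2α₂).of_dvd_sub (v := η₄ * α₄)
      ⟨-(η₃ ^ 2 * η₅ ^ 2 * η₆), by linear_combination e₂⟩).of_mul_right_left
  exact ⟨(c3α₂.mul_left c5α₂).symm, c24⟩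

theorem stmt_10 (η₁ η₂ η₃ η₄ η₅ η₆ η₇ : ℤ) (α₁ α₂ α₄ : ℤ)
    (h₁ : 0 < η₁) (h₂ : 0 < η₂) (h₃ : 0 < η₃) (h₄ : 0 < η₄) (h₅ : 0 < η₅)
    (h₆ : 0 < η₆) (h₇ : 0 < η₇)
    (e₁ : η₁ ^ 2 * η₂ * η₄ ^ 2 * η₇ + η₅ * α₁ - η₆ * α₂ = 0)
    (e₂ : η₂ * η₃ ^ 2 * η₅ ^ 2 * η₆ + η₇ * α₂ - η₄ * α₄ = 0)
    (c₁ : IsCoprime (η₃ * η₅ * η₆) (η₁ * η₄ * η₇))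
    (c₂ : IsCoprime (η₅ * η₇) (η₂ * α₄))
    (c₃ : IsCoprime (η₁ * η₂ * η₃) (α₁ * α₄)) :
    IsCoprime α₂ (η₃ * η₅) ∧ IsCoprime η₂ η₄ :=
  stmt_10_general η₁ η₂ η₃ η₄ η₅ η₆ η₇ α₁ α₂ α₄ e₁ e₂ c₁ c₂ c₃
end

section
/- Suppose positive integers η₁,...,η₇ and integers α₁, α₂, α₄ satisfy the two torsor equations η₁²η₂η₄²η₇ + η₅α₁ − η₆α₂ = 0 and η₂η₃²η₅²η₆ + η₇α₂ − η₄α₄ = 0, with gcd(η₄, η₅) = 1. Then there exists an integer α₃ such that η₂η₃²η₅η₆² + η₇α₁ − η₄α₃ = 0 and η₁²η₂η₄η₇² + η₅α₃ − η₆α₄ = 0. -/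
/-- The common cofactor is `u * x + v * y` for a Bézout relation `u * a + v * b = 1`. -/
theorem IsCoprime.exists_eq_mul_and_eq_mul {R : Type*} [CommSemiring R] {a b x y : R}
    (h : IsCoprime a b) (hxy : b * x = a * y) : ∃ z, x = a * z ∧ y = b * z := by
  obtain ⟨u, v, huv⟩ := h
  refine ⟨u * x + v * y, ?_, ?_⟩
  · calc x = (u * a + v * b) * x := by rw [huv, one_mul]
      _ = a * (u * x + v * y) := by rw [add_mul, mul_assoc v, hxy]; ring
  · calc y = (u * a + v * b) * y := by rw [huv, one_mul]
      _ = b * (u * x + v * y) := by rw [add_mul, mul_assoc u, ← hxy]; ring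

theorem stmt_11_general (η₁ η₂ η₃ η₄ η₅ η₆ η₇ : ℤ) (α₁ α₂ α₄ : ℤ)
    (e₁ : η₁ ^ 2 * η₂ * η₄ ^ 2 * η₇ + η₅ * α₁ - η₆ * α₂ = 0)
    (e₂ : η₂ * η₃ ^ 2 * η₅ ^ 2 * η₆ + η₇ * α₂ - η₄ * α₄ = 0)
    (hcop : IsCoprime η₄ η₅) :
    ∃ α₃ : ℤ,
      η₂ * η₃ ^ 2 * η₅ * η₆ ^ 2 + η₇ * α₁ - η₄ * α₃ = 0 ∧
      η₁ ^ 2 * η₂ * η₄ * η₇ ^ 2 + η₅ * α₃ - η₆ * α₄ = 0 := by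
  have key : η₅ * (η₂ * η₃ ^ 2 * η₅ * η₆ ^ 2 + η₇ * α₁) =
      η₄ * (η₆ * α₄ - η₁ ^ 2 * η₂ * η₄ * η₇ ^ 2) := by
    linear_combination η₇ * e₁ + η₆ * e₂
  obtain ⟨α₃, hN, hM⟩ := hcop.exists_eq_mul_and_eq_mul key
  exact ⟨α₃, by linear_combination hN, by linear_combination -hM⟩

theorem stmt_11 (η₁ η₂ η₃ η₄ η₅ η₆ η₇ : ℤ) (α₁ α₂ α₄ : ℤ)
    (h₁ : 0 < η₁) (h₂ : 0 < η₂) (h₃ : 0 < η₃) (h₄ : 0 < η₄) (h₅ : 0 < η₅)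
    (h₆ : 0 < η₆) (h₇ : 0 < η₇)
    (e₁ : η₁ ^ 2 * η₂ * η₄ ^ 2 * η₇ + η₅ * α₁ - η₆ * α₂ = 0)
    (e₂ : η₂ * η₃ ^ 2 * η₅ ^ 2 * η₆ + η₇ * α₂ - η₄ * α₄ = 0)
    (hcop : IsCoprime η₄ η₅) :
    ∃ α₃ : ℤ,
      η₂ * η₃ ^ 2 * η₅ * η₆ ^ 2 + η₇ * α₁ - η₄ * α₃ = 0 ∧
      η₁ ^ 2 * η₂ * η₄ * η₇ ^ 2 + η₅ * α₃ - η₆ * α₄ = 0 :=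
  stmt_11_general η₁ η₂ η₃ η₄ η₅ η₆ η₇ α₁ α₂ α₄ e₁ e₂ hcop
end

section
/- If integers satisfy the four equations η₁²η₂η₄²η₇ + η₅α₁ − η₆α₂ = 0, η₂η₃²η₅²η₆ + η₇α₂ − η₄α₄ = 0, η₂η₃²η₅η₆² + η₇α₁ − η₄α₃ = 0, η₁²η₂η₄η₇² + η₅α₃ − η₆α₄ = 0, and η₄η₅η₆η₇ ≠ 0, then η₁²η₂²η₃²η₄η₅η₆η₇ + α₁α₄ − α₂α₃ = 0. -/
/- Multiplied by η₅, the fifth equation is the combination α₄·e₁ − α₂·e₄ + η₁²η₂η₄η₇·e₂ of the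
others, so it holds wherever η₅ can be cancelled. -/

theorem torsor_fifth_eq_of_ne_zero {R : Type*} [CommRing R] [NoZeroDivisors R]
    {η₁ η₂ η₃ η₄ η₅ η₆ η₇ α₁ α₂ α₃ α₄ : R}
    (e₁ : η₁ ^ 2 * η₂ * η₄ ^ 2 * η₇ + η₅ * α₁ - η₆ * α₂ = 0)
    (e₂ : η₂ * η₃ ^ 2 * η₅ ^ 2 * η₆ + η₇ * α₂ - η₄ * α₄ = 0)
    (e₄ : η₁ ^ 2 * η₂ * η₄ * η₇ ^ 2 + η₅ * α₃ - η₆ * α₄ = 0) (h₅ : η₅ ≠ 0) :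
    η₁ ^ 2 * η₂ ^ 2 * η₃ ^ 2 * η₄ * η₅ * η₆ * η₇ + α₁ * α₄ - α₂ * α₃ = 0 := by
  have key : η₅ * (η₁ ^ 2 * η₂ ^ 2 * η₃ ^ 2 * η₄ * η₅ * η₆ * η₇ + α₁ * α₄ - α₂ * α₃) = 0 := by
    linear_combination α₄ * e₁ - α₂ * e₄ + η₁ ^ 2 * η₂ * η₄ * η₇ * e₂
  exact (mul_eq_zero.mp key).resolve_left h₅

theorem stmt_12_general (η₁ η₂ η₃ η₄ η₅ η₆ η₇ α₁ α₂ α₃ α₄ : ℤ)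
    (e₁ : η₁ ^ 2 * η₂ * η₄ ^ 2 * η₇ + η₅ * α₁ - η₆ * α₂ = 0)
    (e₂ : η₂ * η₃ ^ 2 * η₅ ^ 2 * η₆ + η₇ * α₂ - η₄ * α₄ = 0)
    (e₄ : η₁ ^ 2 * η₂ * η₄ * η₇ ^ 2 + η₅ * α₃ - η₆ * α₄ = 0)
    (hne : η₄ * η₅ * η₆ * η₇ ≠ 0) :
    η₁ ^ 2 * η₂ ^ 2 * η₃ ^ 2 * η₄ * η₅ * η₆ * η₇ + α₁ * α₄ - α₂ * α₃ = 0 :=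
  torsor_fifth_eq_of_ne_zero e₁ e₂ e₄
    (right_ne_zero_of_mul (left_ne_zero_of_mul (left_ne_zero_of_mul hne)))

theorem stmt_12 (η₁ η₂ η₃ η₄ η₅ η₆ η₇ α₁ α₂ α₃ α₄ : ℤ)
    (e₁ : η₁ ^ 2 * η₂ * η₄ ^ 2 * η₇ + η₅ * α₁ - η₆ * α₂ = 0)
    (e₂ : η₂ * η₃ ^ 2 * η₅ ^ 2 * η₆ + η₇ * α₂ - η₄ * α₄ = 0)
    (e₃ : η₂ * η₃ ^ 2 * η₅ * η₆ ^ 2 + η₇ * α₁ - η₄ * α₃ = 0)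
    (e₄ : η₁ ^ 2 * η₂ * η₄ * η₇ ^ 2 + η₅ * α₃ - η₆ * α₄ = 0)
    (hne : η₄ * η₅ * η₆ * η₇ ≠ 0) :
    η₁ ^ 2 * η₂ ^ 2 * η₃ ^ 2 * η₄ * η₅ * η₆ * η₇ + α₁ * α₄ - α₂ * α₃ = 0 :=
  stmt_12_general η₁ η₂ η₃ η₄ η₅ η₆ η₇ α₁ α₂ α₃ α₄ e₁ e₂ e₄ hne
end

section
/- For a, b, c positive integers, ∑_{k|a, gcd(k,c)=1} μ(k)/(k·φ*(kb)) = φ*(gcd(a,b))/(φ*(b)·φ*(gcd(a,b,c))) · ∏_{p|a, p∤bc}(1 − 1/(p−1)), where the sum is over squarefree divisors (μ vanishes otherwise). -/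
/-!
For squarefree `k` we have `k φ*(kb) = φ*(b) ∏_{p ∣ k} w(p)` with `w(p) = p` if `p ∣ b` and
`w(p) = p - 1` otherwise, so the summand is `μ(k) ∏_{p ∣ k} w(p)⁻¹ / φ*(b)`. Summing
`μ(k) ∏_{p ∣ k} f(p)` over the divisors of `a` coprime to `c` gives `∏_{p ∣ a, p ∤ c} (1 - f(p))`,
and the factors of this product with `p ∣ b` are exactly those of `φ*(gcd(a,b)) / φ*(gcd(a,b,c))`.
-/

open Finset ArithmeticFunction
open scoped ArithmeticFunction.Moebius ArithmeticFunction.zeta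

theorem sum_divisors_moebius_mul_prod_primeFactors {R : Type*} [CommRing R] (f : ℕ → R)
    {n : ℕ} (hn : n ≠ 0) :
    ∑ d ∈ n.divisors, μ d * ∏ p ∈ d.primeFactors, f p = ∏ p ∈ n.primeFactors, (1 - f p) := by
  set g : ArithmeticFunction R := pmul (μ : ArithmeticFunction R) (prodPrimeFactors f)
  have hg : (ζ * g : ArithmeticFunction R).IsMultiplicative :=
    isMultiplicative_zeta.natCast.mul
      (isMultiplicative_moebius.intCast.pmul (IsMultiplicative.prodPrimeFactors f))
  have hg_apply : ∀ d ≠ 0, g d = μ d * ∏ p ∈ d.primeFactors, f p := by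
    intro d hd
    simp [g, pmul_apply, hd]
  have hg_prime_pow {p : ℕ} (hp : p.Prime) (k : ℕ) :
      (ζ * g : ArithmeticFunction R) (p ^ (k + 1)) = 1 - f p := by
    have hsq : ∀ i, g (p ^ (i + 2)) = 0 := fun i => by
      rw [hg_apply _ (pow_ne_zero _ hp.ne_zero), moebius_apply_prime_pow hp (by omega)]
      simp
    rw [coe_zeta_mul_apply, Nat.sum_divisors_prime_pow hp, sum_range_succ', sum_range_succ']
    simp [hsq, hg_apply, hp.ne_zero, moebius_apply_prime hp, hp.primeFactors, sub_eq_neg_add]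
  calc ∑ d ∈ n.divisors, μ d * ∏ p ∈ d.primeFactors, f p
      = (ζ * g : ArithmeticFunction R) n := by
        rw [coe_zeta_mul_apply]
        exact sum_congr rfl fun d hd => (hg_apply d (Nat.pos_of_mem_divisors hd).ne').symm
    _ = ∏ p ∈ n.primeFactors, (1 - f p) := by
        rw [IsMultiplicative.multiplicative_factorization _ hg hn,
          Nat.prod_factorization_eq_prod_primeFactors]
        refine prod_congr rfl fun p hp => ?_
        have hpos : n.factorization p ≠ 0 := by
          rwa [← Finsupp.mem_support_iff, Nat.support_factorization]
        obtain ⟨k, hk⟩ := Nat.exists_eq_succ_of_ne_zero hpos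
        rw [hk]
        exact hg_prime_pow (Nat.prime_of_mem_primeFactors hp) k

theorem sum_divisors_coprime_moebius_mul_prod_primeFactors {R : Type*} [CommRing R] (f : ℕ → R)
    {n c : ℕ} (hn : n ≠ 0) (hc : c ≠ 0) :
    ∑ d ∈ n.divisors.filter (fun d => Nat.gcd d c = 1), μ d * ∏ p ∈ d.primeFactors, f p =
      ∏ p ∈ n.primeFactors \ c.primeFactors, (1 - f p) := by
  -- Killing `f` at the primes of `c` removes exactly the divisors not coprime to `c`.
  set f' : ℕ → R := fun p => if p ∉ c.primeFactors then f p else 0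
  calc ∑ d ∈ n.divisors.filter (fun d => Nat.gcd d c = 1), μ d * ∏ p ∈ d.primeFactors, f p
      = ∑ d ∈ n.divisors, μ d * ∏ p ∈ d.primeFactors, f' p := by
        rw [sum_filter]
        refine sum_congr rfl fun d hd => ?_
        simp only [f', prod_ite_zero, ← disjoint_left,
          Nat.disjoint_primeFactors (Nat.pos_of_mem_divisors hd).ne' hc,
          Nat.coprime_iff_gcd_eq_one]
        split_ifs <;> simp
    _ = ∏ p ∈ n.primeFactors, (1 - f' p) := sum_divisors_moebius_mul_prod_primeFactors f' hn
    _ = ∏ p ∈ n.primeFactors \ c.primeFactors, (1 - f p) := by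
        rw [sdiff_eq_filter, prod_filter]
        refine prod_congr rfl fun p _ => ?_
        by_cases hp : p ∈ c.primeFactors <;>
          simp only [f', hp, not_true_eq_false, not_false_eq_true, if_true, if_false, sub_zero]

lemma phiStar_pos (n : ℕ) : 0 < phiStar n :=
  prod_pos fun p hp => by
    have hp : (1 : ℝ) < p := by exact_mod_cast (Nat.prime_of_mem_primeFactors hp).one_lt
    rw [sub_pos, div_lt_one (by linarith)]
    exact hp

lemma phiStar_eq_mul_prod_sdiff {m n : ℕ} (h : m.primeFactors ⊆ n.primeFactors) :
    phiStar n = phiStar m * ∏ p ∈ n.primeFactors \ m.primeFactors, (1 - 1 / (p : ℝ)) := by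
  rw [phiStar, phiStar, ← prod_sdiff h, mul_comm]

lemma mul_phiStar_mul_of_squarefree {k : ℕ} (hk : Squarefree k) {b : ℕ} (hb : b ≠ 0) :
    k * phiStar (k * b) =
      phiStar b * ∏ p ∈ k.primeFactors, (if p ∈ b.primeFactors then (p : ℝ) else p - 1) := by
  have hsdiff : (k * b).primeFactors \ b.primeFactors = k.primeFactors \ b.primeFactors := by
    rw [Nat.primeFactors_mul hk.ne_zero hb, union_sdiff_right]
  have hkb : b.primeFactors ⊆ (k * b).primeFactors :=
    Nat.primeFactors_mono (dvd_mul_left b k) (mul_ne_zero hk.ne_zero hb)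
  rw [phiStar_eq_mul_prod_sdiff hkb, hsdiff, sdiff_eq_filter, prod_filter, mul_left_comm]
  have hk_prod : (k : ℝ) = ∏ p ∈ k.primeFactors, (p : ℝ) := by
    rw [← Nat.cast_prod, Nat.prod_primeFactors_of_squarefree hk]
  rw [hk_prod, ← prod_mul_distrib]
  refine congrArg _ (prod_congr rfl fun p hp => ?_)
  have hp0 : (p : ℝ) ≠ 0 := by exact_mod_cast (Nat.prime_of_mem_primeFactors hp).ne_zero
  split_ifs <;> field_simp

lemma moebius_div_mul_phiStar_mul (k : ℕ) {b : ℕ} (hb : b ≠ 0) :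
    (μ k : ℝ) / (k * phiStar (k * b)) =
      (μ k * ∏ p ∈ k.primeFactors, 1 / (if p ∈ b.primeFactors then (p : ℝ) else p - 1)) /
        phiStar b := by
  by_cases hk : Squarefree k
  · rw [mul_phiStar_mul_of_squarefree hk hb]
    simp only [one_div, prod_inv_distrib]
    have := (phiStar_pos b).ne'
    field_simp
  · simp [moebius_eq_zero_of_not_squarefree hk]

lemma phiStar_gcd_eq_mul {a b c : ℕ} (ha : a ≠ 0) (hb : b ≠ 0) (hc : c ≠ 0) :
    phiStar (Nat.gcd a b) = phiStar (Nat.gcd a (Nat.gcd b c)) *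
      ∏ p ∈ (a.primeFactors \ c.primeFactors).filter (· ∈ b.primeFactors), (1 - 1 / (p : ℝ)) := by
  have hab : (Nat.gcd a b).primeFactors = a.primeFactors ∩ b.primeFactors :=
    Nat.primeFactors_gcd ha hb
  have habc : (Nat.gcd a (Nat.gcd b c)).primeFactors =
      a.primeFactors ∩ (b.primeFactors ∩ c.primeFactors) := by
    rw [Nat.primeFactors_gcd ha (Nat.gcd_ne_zero_left hb), Nat.primeFactors_gcd hb hc]
  have hsub : (Nat.gcd a (Nat.gcd b c)).primeFactors ⊆ (Nat.gcd a b).primeFactors := by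
    rw [hab, habc]
    exact inter_subset_inter_left inter_subset_left
  rw [phiStar_eq_mul_prod_sdiff hsub]
  congr 2
  ext p
  simp only [hab, habc, mem_sdiff, mem_inter, mem_filter]
  tauto

theorem stmt_14 (a b c : ℕ) (ha : 0 < a) (hb : 0 < b) (hc : 0 < c) :
    ∑ k ∈ a.divisors.filter (fun k => Nat.gcd k c = 1),
        (ArithmeticFunction.moebius k : ℝ) / (k * phiStar (k * b)) =
      phiStar (Nat.gcd a b) / (phiStar b * phiStar (Nat.gcd a (Nat.gcd b c))) *
        ∏ p ∈ a.primeFactors \ (b * c).primeFactors, (1 - 1 / ((p : ℝ) - 1)) := by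
  have hrest : a.primeFactors \ (b * c).primeFactors =
      (a.primeFactors \ c.primeFactors).filter (· ∉ b.primeFactors) := by
    ext p
    simp only [Nat.primeFactors_mul hb.ne' hc.ne', mem_sdiff, mem_union, mem_filter]
    tauto
  simp_rw [moebius_div_mul_phiStar_mul _ hb.ne']
  rw [← sum_div, sum_divisors_coprime_moebius_mul_prod_primeFactors _ ha.ne' hc.ne',
    phiStar_gcd_eq_mul ha.ne' hb.ne' hc.ne', hrest]
  simp_rw [apply_ite (fun x : ℝ => 1 - 1 / x)]
  rw [prod_ite]
  have := (phiStar_pos b).ne'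
  have := (phiStar_pos (Nat.gcd a (Nat.gcd b c))).ne'
  field_simp
end

section
/- Let h(u₂, t₇, t₆) = max{t₆, t₇, t₇|t₇ − t₆u₂|, |t₇ − t₆u₂|·|t₆ + t₇u₂|}. For fixed t₆, t₇ > 0, the Lebesgue measure of {u₂ ∈ ℝ : h(u₂, t₇, t₆) ≤ 1} is O(t₆^{-1/2} t₇^{-1/2}). -/
open MeasureTheory

noncomputable def hfun (u₂ t₇ t₆ : ℝ) : ℝ :=
  max (max t₆ t₇) (max (t₇ * |t₇ - t₆ * u₂|) (|t₇ - t₆ * u₂| * |t₆ + t₇ * u₂|))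

/-! The last term of `hfun` is `t₆ t₇ |u₂ - t₇/t₆| |u₂ + t₆/t₇|`, so `hfun u₂ t₇ t₆ ≤ 1` forces
`u₂` to lie within `s = (t₆ t₇)^(-1/2)` of one of the two roots `t₇/t₆`, `-t₆/t₇`; the set
therefore has measure at most `4 s`. -/

lemma abs_sub_le_or_abs_sub_le_of_abs_mul_abs_le {u a b r : ℝ} (hr : 0 ≤ r)
    (h : |u - a| * |u - b| ≤ r ^ 2) : |u - a| ≤ r ∨ |u - b| ≤ r := by
  by_contra! hlt
  nlinarith [mul_lt_mul'' hlt.1 hlt.2 hr hr]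

lemma volume_setOf_abs_mul_abs_le (a b : ℝ) {r : ℝ} (hr : 0 ≤ r) :
    volume {u : ℝ | |u - a| * |u - b| ≤ r ^ 2} ≤ ENNReal.ofReal (4 * r) := by
  have hsub : {u : ℝ | |u - a| * |u - b| ≤ r ^ 2} ⊆
      Metric.closedBall a r ∪ Metric.closedBall b r := fun u hu => by
    simpa only [Set.mem_union, Metric.mem_closedBall, Real.dist_eq]
      using abs_sub_le_or_abs_sub_le_of_abs_mul_abs_le hr hu
  calc volume {u : ℝ | |u - a| * |u - b| ≤ r ^ 2}
      ≤ volume (Metric.closedBall a r) + volume (Metric.closedBall b r) :=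
        (measure_mono hsub).trans (measure_union_le _ _)
    _ = ENNReal.ofReal (4 * r) := by
        rw [Real.volume_closedBall, Real.volume_closedBall,
          ← ENNReal.ofReal_add (by positivity) (by positivity)]
        ring_nf

lemma rpow_neg_half_sq {t : ℝ} (ht : 0 < t) : (t ^ (-(1 / 2 : ℝ))) ^ 2 = t⁻¹ := by
  rw [← Real.rpow_natCast, ← Real.rpow_mul ht.le]
  norm_num [Real.rpow_neg_one]

lemma abs_mul_abs_sub_le_of_hfun_le_one {u t₆ t₇ : ℝ} (h₆ : 0 < t₆) (h₇ : 0 < t₇)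
    (h : hfun u t₇ t₆ ≤ 1) :
    |u - t₇ / t₆| * |u - -(t₆ / t₇)| ≤ (t₆ ^ (-(1 / 2 : ℝ)) * t₇ ^ (-(1 / 2 : ℝ))) ^ 2 := by
  have hprod : |t₇ - t₆ * u| * |t₆ + t₇ * u| ≤ 1 :=
    (le_max_right _ _).trans ((le_max_right _ _).trans h)
  have hfactor : |t₇ - t₆ * u| * |t₆ + t₇ * u| =
      t₆ * t₇ * (|u - t₇ / t₆| * |u - -(t₆ / t₇)|) := by
    have hring : (t₇ - t₆ * u) * (t₆ + t₇ * u) =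
        -(t₆ * t₇ * ((u - t₇ / t₆) * (u - -(t₆ / t₇)))) := by
      field_simp
      ring
    rw [← abs_mul, hring, abs_neg, abs_mul, abs_of_pos (mul_pos h₆ h₇), abs_mul]
  rw [mul_pow, rpow_neg_half_sq h₆, rpow_neg_half_sq h₇, ← mul_inv,
    inv_eq_one_div, le_div_iff₀' (mul_pos h₆ h₇)]
  linarith

theorem stmt_15 :
    ∃ C : ℝ, 0 < C ∧ ∀ t₆ t₇ : ℝ, 0 < t₆ → 0 < t₇ →
      (volume {u₂ : ℝ | hfun u₂ t₇ t₆ ≤ 1}).toReal ≤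
        C * t₆ ^ (-(1 / 2 : ℝ)) * t₇ ^ (-(1 / 2 : ℝ)) := by
  refine ⟨4, by norm_num, fun t₆ t₇ h₆ h₇ => ?_⟩
  set s := t₆ ^ (-(1 / 2 : ℝ)) * t₇ ^ (-(1 / 2 : ℝ))
  have hs : 0 ≤ s := by positivity
  have hvol : volume {u₂ : ℝ | hfun u₂ t₇ t₆ ≤ 1} ≤ ENNReal.ofReal (4 * s) :=
    (measure_mono fun _ hu => abs_mul_abs_sub_le_of_hfun_le_one h₆ h₇ hu).trans
      (volume_setOf_abs_mul_abs_le _ _ hs)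
  calc (volume {u₂ : ℝ | hfun u₂ t₇ t₆ ≤ 1}).toReal
      ≤ 4 * s := ENNReal.toReal_le_of_le_ofReal (by positivity) hvol
    _ = 4 * t₆ ^ (-(1 / 2 : ℝ)) * t₇ ^ (-(1 / 2 : ℝ)) := (mul_assoc _ _ _).symm
end

section
/- For each prime p, the sum over (k₁,...,k₅) ∈ ℤ_{≥0}⁵ of Θ(p^{k₁}, p^{k₂}, p^{k₃}, p^{k₄}, p^{k₅})·p^{-(k₁+k₂+k₃+k₄+k₅)} equals (1 − 1/p²)^{-1}(1 − 1/p)(1 + 6/p + 1/p²). -/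
/-!
`Θ(p^{k₁}, …, p^{k₅})` only depends on which of the `kᵢ` vanish. Grouping the exponent vectors by
this support pattern `β ∈ {0,1}⁵`, the weights `p^{-(k₁+⋯+k₅)}` of one group add up to `r^{|β|}`
with `r = ∑_{k ≥ 1} p^{-k} = 1/(p-1)`, so the series is the finite sum
`∑_β Θ(p^{β₁}, …, p^{β₅}) r^{|β|}`. Only ten patterns survive the coprimality conditions: the empty
one, the five singletons and `{1,2}`, `{1,4}`, `{2,3}`, `{3,5}`.
-/

open Finset

noncomputable def phiDag (n : ℕ) : ℝ := ∏ p ∈ n.primeFactors, (1 - 1 / (p : ℝ) ^ 2)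

noncomputable def Theta (η₁ η₂ η₃ η₄ η₅ : ℕ) : ℝ :=
  if Nat.gcd (η₁ * η₄) (η₃ * η₅) = 1 ∧ Nat.gcd η₂ (η₄ * η₅) = 1 then
    phiStar (η₁ * η₂ * η₃ * η₄ * η₅) / phiDag (η₁ * η₂ * η₃ * η₄ * η₅) *
      phiStar (η₂ * η₃ * η₄ * η₅) * phiStar (η₁ * η₂ * η₄ * η₅) *
      (phiStar (η₁ * η₂) / phiStar (η₂ * η₄)) *
      (phiStar (η₂ * η₃) / phiStar (η₂ * η₅))
  else 0

section FiberSums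

variable {ι κ P Q : Type*}

structure HasFiberSums [DecidableEq P] (π : ι → P) (ω : ι → ℝ) (W : P → ℝ) : Prop where
  nonneg : 0 ≤ ω
  hasSum : ∀ β, HasSum (fun i => if π i = β then ω i else 0) (W β)

lemma hasSum_mul_of_nonneg {f : ι → ℝ} {g : κ → ℝ} {s t : ℝ} (hf : HasSum f s)
    (hg : HasSum g t) (hf₀ : 0 ≤ f) (hg₀ : 0 ≤ g) :
    HasSum (fun x : ι × κ => f x.1 * g x.2) (s * t) :=
  hf.mul hg (hf.summable.mul_of_nonneg hg.summable hf₀ hg₀)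

lemma HasFiberSums.prod [DecidableEq P] [DecidableEq Q] {π₁ : ι → P} {π₂ : κ → Q}
    {ω₁ : ι → ℝ} {ω₂ : κ → ℝ} {W₁ : P → ℝ} {W₂ : Q → ℝ} (h₁ : HasFiberSums π₁ ω₁ W₁)
    (h₂ : HasFiberSums π₂ ω₂ W₂) :
    HasFiberSums (Prod.map π₁ π₂) (fun x => ω₁ x.1 * ω₂ x.2) (fun β => W₁ β.1 * W₂ β.2) where
  nonneg x := mul_nonneg (h₁.nonneg x.1) (h₂.nonneg x.2)
  hasSum β := by
    convert hasSum_mul_of_nonneg (h₁.hasSum β.1) (h₂.hasSum β.2)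
      (fun i => by dsimp only; split_ifs; exacts [h₁.nonneg i, le_rfl])
      (fun i => by dsimp only; split_ifs; exacts [h₂.nonneg i, le_rfl]) using 2 with x
    simp only [Prod.map, Prod.ext_iff, ite_and, ite_mul, zero_mul, mul_ite, mul_zero]
    split_ifs <;> simp

lemma HasFiberSums.hasSum_comp_mul [Fintype P] [DecidableEq P] {π : ι → P} {ω : ι → ℝ}
    {W : P → ℝ} (h : HasFiberSums π ω W) (F : P → ℝ) :
    HasSum (fun i => F (π i) * ω i) (∑ β, F β * W β) := by
  have hF : ∀ i, F (π i) * ω i = ∑ β, F β * (if π i = β then ω i else 0) := fun i => by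
    simp only [mul_ite, mul_zero, sum_ite_eq, mem_univ, if_true]
  simp only [hF]
  exact hasSum_sum fun β _ => (h.hasSum β).mul_left (F β)

end FiberSums

lemma hasFiberSums_pow {q : ℝ} (hq₀ : 0 ≤ q) (hq₁ : q < 1) :
    HasFiberSums (fun k : ℕ => decide (0 < k)) (q ^ ·) (fun b => (q / (1 - q)) ^ b.toNat) where
  nonneg k := pow_nonneg hq₀ k
  hasSum
    | false => by
      simp only [Bool.toNat_false, pow_zero]
      convert hasSum_ite_eq 0 (1 : ℝ) using 2 with k
      cases k <;> simp
    | true => by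
      simp only [Bool.toNat_true, pow_one]
      have hsum := (hasSum_geometric_of_lt_one hq₀ hq₁).sub (hasSum_ite_eq 0 (1 : ℝ))
      rw [show (1 - q)⁻¹ - 1 = q / (1 - q) by field_simp [(sub_pos.2 hq₁).ne']; ring] at hsum
      have hfib : (fun k : ℕ => if decide (0 < k) = true then q ^ k else 0) =
          fun k => q ^ k - if k = 0 then 1 else 0 := by
        funext k; cases k <;> simp
      rwa [hfib]

section PrimePower

variable {p : ℕ}

lemma phiStar_prime_pow (hp : p.Prime) (n : ℕ) :
    phiStar (p ^ n) = if n = 0 then 1 else 1 - 1 / (p : ℝ) := by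
  rcases eq_or_ne n 0 with rfl | hn
  · simp [phiStar]
  · simp [phiStar, Nat.primeFactors_prime_pow hn hp, hn]

lemma phiDag_prime_pow (hp : p.Prime) (n : ℕ) :
    phiDag (p ^ n) = if n = 0 then 1 else 1 - 1 / (p : ℝ) ^ 2 := by
  rcases eq_or_ne n 0 with rfl | hn
  · simp [phiDag]
  · simp [phiDag, Nat.primeFactors_prime_pow hn hp, hn]

lemma gcd_prime_pow_eq_one_iff (hp : p.Prime) (m n : ℕ) :
    Nat.gcd (p ^ m) (p ^ n) = 1 ↔ m = 0 ∨ n = 0 := by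
  rcases Nat.eq_zero_or_pos m with rfl | hm
  · simp
  rcases Nat.eq_zero_or_pos n with rfl | hn
  · simp
  simp [Nat.coprime_pow_left_iff hm, Nat.coprime_pow_right_iff hn, hp.ne_one, hm.ne', hn.ne']

lemma theta_prime_pow_congr (hp : p.Prime) {a b c d e a' b' c' d' e' : ℕ} (ha : a = 0 ↔ a' = 0)
    (hb : b = 0 ↔ b' = 0) (hc : c = 0 ↔ c' = 0) (hd : d = 0 ↔ d' = 0) (he : e = 0 ↔ e' = 0) :
    Theta (p ^ a) (p ^ b) (p ^ c) (p ^ d) (p ^ e) =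
      Theta (p ^ a') (p ^ b') (p ^ c') (p ^ d') (p ^ e') := by
  simp only [Theta, ← pow_add, gcd_prime_pow_eq_one_iff hp, phiStar_prime_pow hp,
    phiDag_prime_pow hp, Nat.add_eq_zero_iff, ha, hb, hc, hd, he]

lemma sum_theta_prime_pow_pattern (hp : p.Prime) :
    ∑ β : Bool × Bool × Bool × Bool × Bool,
      Theta (p ^ β.1.toNat) (p ^ β.2.1.toNat) (p ^ β.2.2.1.toNat) (p ^ β.2.2.2.1.toNat)
          (p ^ β.2.2.2.2.toNat) *
        (((p : ℝ)⁻¹ / (1 - (p : ℝ)⁻¹)) ^ β.1.toNat *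
          (((p : ℝ)⁻¹ / (1 - (p : ℝ)⁻¹)) ^ β.2.1.toNat *
            (((p : ℝ)⁻¹ / (1 - (p : ℝ)⁻¹)) ^ β.2.2.1.toNat *
              (((p : ℝ)⁻¹ / (1 - (p : ℝ)⁻¹)) ^ β.2.2.2.1.toNat *
                ((p : ℝ)⁻¹ / (1 - (p : ℝ)⁻¹)) ^ β.2.2.2.2.toNat)))) =
      (1 - 1 / (p : ℝ) ^ 2)⁻¹ * (1 - 1 / (p : ℝ)) * (1 + 6 / (p : ℝ) + 1 / (p : ℝ) ^ 2) := by
  have hp1 : (1 : ℝ) < p := by exact_mod_cast hp.one_lt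
  simp only [Fintype.sum_prod_type, Fintype.sum_bool, Bool.toNat_true, Bool.toNat_false, Theta,
    ← pow_add, gcd_prime_pow_eq_one_iff hp, phiStar_prime_pow hp, phiDag_prime_pow hp]
  norm_num
  have h₁ : 1 - (p : ℝ)⁻¹ ≠ 0 := (sub_pos.2 (inv_lt_one_of_one_lt₀ hp1)).ne'
  have h₂ : 1 - (p : ℝ)⁻¹ ^ 2 ≠ 0 := by
    rw [inv_pow]; exact (sub_pos.2 (inv_lt_one_of_one_lt₀ (one_lt_pow₀ hp1 two_ne_zero))).ne'
  simp only [← inv_pow, div_eq_mul_inv]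
  generalize (p : ℝ)⁻¹ = q at h₁ h₂ ⊢
  field_simp
  ring

end PrimePower

theorem stmt_18 (p : ℕ) (hp : p.Prime) :
    ∑' k : ℕ × ℕ × ℕ × ℕ × ℕ,
        Theta (p ^ k.1) (p ^ k.2.1) (p ^ k.2.2.1) (p ^ k.2.2.2.1) (p ^ k.2.2.2.2) /
          (p : ℝ) ^ (k.1 + k.2.1 + k.2.2.1 + k.2.2.2.1 + k.2.2.2.2) =
      (1 - 1 / (p : ℝ) ^ 2)⁻¹ * (1 - 1 / (p : ℝ)) *
        (1 + 6 / (p : ℝ) + 1 / (p : ℝ) ^ 2) := by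
  have hp1 : (1 : ℝ) < p := by exact_mod_cast hp.one_lt
  have hpow := hasFiberSums_pow (by positivity) (inv_lt_one_of_one_lt₀ hp1)
  have hsum := (hpow.prod (hpow.prod (hpow.prod (hpow.prod hpow)))).hasSum_comp_mul fun β =>
    Theta (p ^ β.1.toNat) (p ^ β.2.1.toNat) (p ^ β.2.2.1.toNat) (p ^ β.2.2.2.1.toNat)
      (p ^ β.2.2.2.2.toNat)
  rw [← sum_theta_prime_pow_pattern hp, ← hsum.tsum_eq]
  refine tsum_congr fun ⟨a, b, c, d, e⟩ => ?_
  have hzero (k : ℕ) : k = 0 ↔ (decide (0 < k)).toNat = 0 := by cases k <;> simp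
  rw [theta_prime_pow_congr hp (hzero a) (hzero b) (hzero c) (hzero d) (hzero e)]
  simp only [Prod.map, div_eq_mul_inv, pow_add, mul_inv, inv_pow, mul_assoc]
end

section
/- The volume of the polytope in ℝ⁵ defined by t₁,...,t₅ ≥ 0, t₁ + 2t₂ + 3t₃ + 2t₅ ≤ 1, and 3t₁ + 2t₂ + t₃ + 2t₄ ≤ 1 equals 1/2160. -/
/-!
The linear form `ℓ t = t 0 - t 2 + t 3 - t 4` is half the difference of the two constraints, and
the coordinate permutation `(0 2)(3 4)` swaps the two constraints and negates `ℓ`. Hence the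
polytope is the union of two congruent halves `ℓ ≤ 0` and `0 ≤ ℓ` meeting in a null hyperplane,
and on the half `ℓ ≤ 0` only the first constraint matters. Cutting that half along the hyperplanes
`t 0 - t 2 + t 3 = 0` and `t 0 = t 2` leaves three simplices, each the preimage of the corner
simplex `{x ≥ 0, ∑ x ≤ 1}` (of volume `1 / 5!`) under an integer matrix of determinant `144`, `96`
or `96`. So the volume is `2 (1/144 + 2/96) / 120 = 1/2160`.
-/

open MeasureTheory

theorem measure_eq_inter_nonpos_add_inter_nonneg {E : Type*} [NormedAddCommGroup E]
    [NormedSpace ℝ E] [MeasurableSpace E] [BorelSpace E] [FiniteDimensional ℝ E]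
    (μ : Measure E) [μ.IsAddHaarMeasure] {s : Set E} (hs : NullMeasurableSet s μ)
    (ℓ : E →ₗ[ℝ] ℝ) (hℓ : ℓ ≠ 0) :
    μ s = μ (s ∩ {x | ℓ x ≤ 0}) + μ (s ∩ {x | 0 ≤ ℓ x}) := by
  have hker : μ (LinearMap.ker ℓ) = 0 :=
    Measure.addHaar_submodule μ _ (by rwa [Ne, LinearMap.ker_eq_top])
  have hcont : Continuous ℓ := ℓ.continuous_of_finiteDimensional
  rw [← measure_union₀ (hs.inter (measurableSet_le continuous_const.measurable
      hcont.measurable).nullMeasurableSet)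
    (measure_mono_null (fun x hx => le_antisymm hx.1.2 hx.2.2) hker),
    ← Set.inter_union_distrib_left]
  congr 1
  ext x
  simp [le_total]

theorem volume_preimage_comp_equiv {ι : Type*} [Fintype ι] (σ : ι ≃ ι) (s : Set (ι → ℝ)) :
    volume ((fun x => x ∘ σ) ⁻¹' s) = volume s := by
  have : ⇑(MeasurableEquiv.piCongrLeft (fun _ : ι => ℝ) σ.symm) = fun x => x ∘ σ := by
    funext x i
    simp [MeasurableEquiv.piCongrLeft, Equiv.piCongrLeft_apply]
  rw [← this]
  exact (volume_measurePreserving_piCongrLeft (fun _ : ι => ℝ) σ.symm).measure_preimage_equiv s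

def cornerSimplex (n : ℕ) (c : ℝ) : Set (Fin n → ℝ) := {x | (∀ i, 0 ≤ x i) ∧ ∑ i, x i ≤ c}

theorem isClosed_cornerSimplex (n : ℕ) (c : ℝ) : IsClosed (cornerSimplex n c) := by
  simp only [cornerSimplex, Set.ofPred_and, Set.ofPred_forall]
  exact (isClosed_iInter fun i => isClosed_le continuous_const (continuous_apply i)).inter
    (isClosed_le (continuous_finsetSum _ fun i _ => continuous_apply i) continuous_const)

theorem cons_mem_cornerSimplex_succ {n : ℕ} {c a : ℝ} {y : Fin n → ℝ} :
    (Fin.cons a y : Fin (n + 1) → ℝ) ∈ cornerSimplex (n + 1) c ↔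
      0 ≤ a ∧ y ∈ cornerSimplex n (c - a) := by
  simp only [cornerSimplex, Set.mem_ofPred_eq, Fin.forall_fin_succ, Fin.cons_zero, Fin.cons_succ,
    Fin.sum_univ_succ, le_sub_iff_add_le', and_assoc]

theorem cornerSimplex_eq_empty_of_neg {n : ℕ} {c : ℝ} (hc : c < 0) : cornerSimplex n c = ∅ :=
  Set.eq_empty_of_forall_notMem fun _ ⟨hx, hsum⟩ =>
    (Finset.sum_nonneg fun i _ => hx i).not_gt (hsum.trans_lt hc)

theorem lintegral_Icc_ofReal_sub_pow_div_factorial (n : ℕ) {c : ℝ} (hc : 0 ≤ c) :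
    ∫⁻ a in Set.Icc 0 c, ENNReal.ofReal ((c - a) ^ n / n.factorial) =
      ENNReal.ofReal (c ^ (n + 1) / (n + 1).factorial) := by
  have hnonneg : 0 ≤ᵐ[volume.restrict (Set.Icc 0 c)] fun a => (c - a) ^ n / n.factorial :=
    (ae_restrict_iff' measurableSet_Icc).2 <| .of_forall fun a ha => by
      have : 0 ≤ c - a := sub_nonneg.2 ha.2
      positivity
  rw [← ofReal_integral_eq_lintegral_ofReal (by fun_prop : Continuous _).integrableOn_Icc hnonneg,
    integral_Icc_eq_integral_Ioc, ← intervalIntegral.integral_of_le hc,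
    intervalIntegral.integral_div, intervalIntegral.integral_comp_sub_left (fun a => a ^ n)]
  simp only [sub_self, sub_zero, integral_pow, Nat.factorial_succ]
  push_cast
  rw [zero_pow n.succ_ne_zero, sub_zero]
  field_simp

theorem volume_cornerSimplex (n : ℕ) {c : ℝ} (hc : 0 ≤ c) :
    volume (cornerSimplex n c) = ENNReal.ofReal (c ^ n / n.factorial) := by
  induction n generalizing c with
  | zero =>
    have : cornerSimplex 0 c = Set.univ := Set.eq_univ_of_forall fun x => ⟨finZeroElim, by simpa⟩
    simp [this, volume_pi]
  | succ n ih =>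
    set e := MeasurableEquiv.piFinSuccAbove (fun _ : Fin (n + 1) => ℝ) 0
    have hslice (a : ℝ) : volume (Prod.mk a ⁻¹' (e.symm ⁻¹' cornerSimplex (n + 1) c)) =
        (Set.Icc 0 c).indicator (fun a => ENNReal.ofReal ((c - a) ^ n / n.factorial)) a := by
      have : Prod.mk a ⁻¹' (e.symm ⁻¹' cornerSimplex (n + 1) c) =
          if 0 ≤ a then cornerSimplex n (c - a) else ∅ := by
        ext y
        simp only [e, MeasurableEquiv.piFinSuccAbove_symm_apply, Fin.insertNthEquiv_zero,
          Set.mem_preimage, Set.mem_ite_empty_right]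
        exact cons_mem_cornerSimplex_succ
      rw [this]
      split_ifs with ha
      · by_cases hac : a ≤ c
        · rw [Set.indicator_of_mem (show a ∈ Set.Icc 0 c from ⟨ha, hac⟩), ih (sub_nonneg.2 hac)]
        · rw [Set.indicator_of_notMem fun h => hac h.2,
            cornerSimplex_eq_empty_of_neg (sub_neg.2 (not_le.1 hac)), measure_empty]
      · rw [Set.indicator_of_notMem fun h => ha h.1, measure_empty]
    rw [← (volume_preserving_piFinSuccAbove (fun _ => ℝ) 0).symm.measure_preimage_equiv,
      Measure.volume_eq_prod, Measure.prod_apply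
        ((isClosed_cornerSimplex _ _).measurableSet.preimage e.symm.measurable),
      lintegral_congr hslice, lintegral_indicator measurableSet_Icc,
      lintegral_Icc_ofReal_sub_pow_div_factorial n hc]

theorem volume_preimage_toLin'_cornerSimplex {n : ℕ} {N : Matrix (Fin n) (Fin n) ℝ} {d : ℝ}
    (hN : N.det = d) (hd : d ≠ 0) :
    volume (Matrix.toLin' N ⁻¹' cornerSimplex n 1) = ENNReal.ofReal (1 / (|d| * n.factorial)) := by
  rw [Measure.addHaar_preimage_linearMap _ (by rwa [LinearMap.det_toLin', hN]),
    LinearMap.det_toLin', hN, volume_cornerSimplex n zero_le_one,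
    ← ENNReal.ofReal_mul (abs_nonneg _), abs_inv, one_pow]
  congr 1
  field_simp

def polytope : Set (Fin 5 → ℝ) :=
  {t | (∀ i, 0 ≤ t i) ∧ t 0 + 2 * t 1 + 3 * t 2 + 2 * t 4 ≤ 1 ∧
    3 * t 0 + 2 * t 1 + t 2 + 2 * t 3 ≤ 1}

def halfPolytope : Set (Fin 5 → ℝ) :=
  {t | (∀ i, 0 ≤ t i) ∧ t 0 + t 3 ≤ t 2 + t 4 ∧ t 0 + 2 * t 1 + 3 * t 2 + 2 * t 4 ≤ 1}

theorem measurableSet_polytope : MeasurableSet polytope := by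
  simp only [polytope, Set.ofPred_and, Set.ofPred_forall]
  refine (MeasurableSet.iInter fun i => measurableSet_le ?_ ?_).inter
    ((measurableSet_le ?_ ?_).inter (measurableSet_le ?_ ?_)) <;> fun_prop

theorem measurableSet_halfPolytope : MeasurableSet halfPolytope := by
  simp only [halfPolytope, Set.ofPred_and, Set.ofPred_forall]
  refine (MeasurableSet.iInter fun i => measurableSet_le ?_ ?_).inter
    ((measurableSet_le ?_ ?_).inter (measurableSet_le ?_ ?_)) <;> fun_prop

theorem polytope_inter_nonpos : polytope ∩ {t | ![1, 0, -1, 1, -1] ⬝ᵥ t ≤ 0} = halfPolytope := by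
  ext t
  simp only [polytope, halfPolytope, Set.mem_inter_iff, Set.mem_ofPred_eq, dotProduct,
    Fin.sum_univ_five, Matrix.cons_val]
  constructor
  · rintro ⟨⟨ht, ha, -⟩, hℓ⟩
    exact ⟨ht, by linarith, ha⟩
  · rintro ⟨ht, hℓ, ha⟩
    exact ⟨⟨ht, ha, by linarith⟩, by linarith⟩

theorem polytope_inter_nonneg :
    polytope ∩ {t | 0 ≤ ![1, 0, -1, 1, -1] ⬝ᵥ t} =
      (fun t => t ∘ (Equiv.swap 0 2 * Equiv.swap 3 4 : Equiv.Perm (Fin 5))) ⁻¹'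
        (polytope ∩ {t | ![1, 0, -1, 1, -1] ⬝ᵥ t ≤ 0}) := by
  ext t
  simp only [polytope, Set.mem_inter_iff, Set.mem_ofPred_eq, Set.mem_preimage, dotProduct,
    Fin.sum_univ_five, Fin.forall_fin_succ, Fin.succ_zero_eq_one, Fin.succ_one_eq_two,
    Fin.reduceSucc, Matrix.cons_val, IsEmpty.forall_iff, and_true, Function.comp_apply,
    Equiv.Perm.coe_mul, ne_eq, Fin.reduceEq, not_false_eq_true, Equiv.swap_apply_of_ne_of_ne,
    Equiv.swap_apply_left, Equiv.swap_apply_right]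
  constructor <;> simp only [and_imp] <;> intros <;> (repeat' apply And.intro) <;> linarith

-- The rows of each matrix below are the facet inequalities of the piece, scaled so that they sum
-- to the constraint `t 0 + 2 * t 1 + 3 * t 2 + 2 * t 4 ≤ 1`.
theorem volume_halfPolytope_inter_nonpos :
    volume (halfPolytope ∩ {t | ![1, 0, -1, 1, 0] ⬝ᵥ t ≤ 0}) = ENNReal.ofReal (1 / 17280) := by
  convert volume_preimage_toLin'_cornerSimplex (d := 144)
    (N := !![4, 0, 0, 0, 0; 0, 2, 0, 0, 0; -3, 0, 3, -3, 0; 0, 0, 0, 3, 0; 0, 0, 0, 0, 2])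
    (by simp [Matrix.det_succ_row_zero, Fin.sum_univ_succ]; norm_num) (by norm_num) using 2
  · ext t
    simp only [halfPolytope, cornerSimplex, Set.mem_inter_iff, Set.mem_ofPred_eq, Set.mem_preimage,
      Matrix.toLin'_apply, Matrix.mulVec, dotProduct, Fin.sum_univ_five, Fin.forall_fin_succ,
      Fin.succ_zero_eq_one, Fin.succ_one_eq_two, Fin.reduceSucc, Matrix.of_apply,
      Matrix.cons_val', Matrix.cons_val, IsEmpty.forall_iff, and_true]
    constructor <;> simp only [and_imp] <;> intros <;> (repeat' apply And.intro) <;> linarith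
  · norm_num [Nat.factorial]

theorem volume_halfPolytope_inter_nonneg_inter_nonpos :
    volume (halfPolytope ∩ {t | 0 ≤ ![1, 0, -1, 1, 0] ⬝ᵥ t} ∩ {t | ![1, 0, -1, 0, 0] ⬝ᵥ t ≤ 0}) =
      ENNReal.ofReal (1 / 11520) := by
  convert volume_preimage_toLin'_cornerSimplex (d := 96)
    (N := !![4, 0, 0, 0, 0; 0, 2, 0, 0, 0; -3, 0, 3, 0, 0; 2, 0, -2, 2, 0; -2, 0, 2, -2, 2])
    (by simp [Matrix.det_succ_row_zero, Fin.sum_univ_succ]; norm_num) (by norm_num) using 2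
  · ext t
    simp only [halfPolytope, cornerSimplex, Set.mem_inter_iff, Set.mem_ofPred_eq, Set.mem_preimage,
      Matrix.toLin'_apply, Matrix.mulVec, dotProduct, Fin.sum_univ_five, Fin.forall_fin_succ,
      Fin.succ_zero_eq_one, Fin.succ_one_eq_two, Fin.reduceSucc, Matrix.of_apply,
      Matrix.cons_val', Matrix.cons_val, IsEmpty.forall_iff, and_true]
    constructor <;> simp only [and_imp] <;> intros <;> (repeat' apply And.intro) <;> linarith
  · norm_num [Nat.factorial]

theorem volume_halfPolytope_inter_nonneg_inter_nonneg :
    volume (halfPolytope ∩ {t | 0 ≤ ![1, 0, -1, 1, 0] ⬝ᵥ t} ∩ {t | 0 ≤ ![1, 0, -1, 0, 0] ⬝ᵥ t}) =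
      ENNReal.ofReal (1 / 11520) := by
  convert volume_preimage_toLin'_cornerSimplex (d := 96)
    (N := !![3, 0, -3, 0, 0; 0, 2, 0, 0, 0; 0, 0, 4, 0, 0; 0, 0, 0, 2, 0; -2, 0, 2, -2, 2])
    (by simp [Matrix.det_succ_row_zero, Fin.sum_univ_succ]; simp +decide [Fin.succAbove]; norm_num)
    (by norm_num) using 2
  · ext t
    simp only [halfPolytope, cornerSimplex, Set.mem_inter_iff, Set.mem_ofPred_eq, Set.mem_preimage,
      Matrix.toLin'_apply, Matrix.mulVec, dotProduct, Fin.sum_univ_five, Fin.forall_fin_succ,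
      Fin.succ_zero_eq_one, Fin.succ_one_eq_two, Fin.reduceSucc, Matrix.of_apply,
      Matrix.cons_val', Matrix.cons_val, IsEmpty.forall_iff, and_true]
    constructor <;> simp only [and_imp] <;> intros <;> (repeat' apply And.intro) <;> linarith
  · norm_num [Nat.factorial]

theorem volume_halfPolytope : volume halfPolytope = ENNReal.ofReal (1 / 4320) := by
  rw [measure_eq_inter_nonpos_add_inter_nonneg volume measurableSet_halfPolytope.nullMeasurableSet
    (dotProductEquiv ℝ (Fin 5) ![1, 0, -1, 1, 0]) (by simp)]
  simp only [dotProductEquiv_apply_apply]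
  rw [measure_eq_inter_nonpos_add_inter_nonneg volume
    (s := halfPolytope ∩ {t | 0 ≤ ![1, 0, -1, 1, 0] ⬝ᵥ t})
    (measurableSet_halfPolytope.inter
      (measurableSet_le (by fun_prop) (by fun_prop))).nullMeasurableSet
    (dotProductEquiv ℝ (Fin 5) ![1, 0, -1, 0, 0]) (by simp)]
  simp only [dotProductEquiv_apply_apply]
  rw [volume_halfPolytope_inter_nonpos, volume_halfPolytope_inter_nonneg_inter_nonpos,
    volume_halfPolytope_inter_nonneg_inter_nonneg, ← ENNReal.ofReal_add (by norm_num) (by norm_num),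
    ← ENNReal.ofReal_add (by norm_num) (by norm_num)]
  norm_num

theorem stmt_19 :
    volume {t : Fin 5 → ℝ | (∀ i, 0 ≤ t i) ∧
        t 0 + 2 * t 1 + 3 * t 2 + 2 * t 4 ≤ 1 ∧
        3 * t 0 + 2 * t 1 + t 2 + 2 * t 3 ≤ 1} =
      ENNReal.ofReal (1 / 2160) := by
  change volume polytope = _
  rw [measure_eq_inter_nonpos_add_inter_nonneg volume measurableSet_polytope.nullMeasurableSet
    (dotProductEquiv ℝ (Fin 5) ![1, 0, -1, 1, -1]) (by simp)]
  simp only [dotProductEquiv_apply_apply]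
  rw [polytope_inter_nonneg, volume_preimage_comp_equiv, polytope_inter_nonpos, volume_halfPolytope,
    ← ENNReal.ofReal_add (by norm_num) (by norm_num)]
  norm_num
end
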